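/- arXiv:2006.13166 — 18 statements merged into one kernel-verified Lean document; each statement's English description precedes it below -/
import Mathlib

section
/- For every t ∈ ℝ, the point Δ_u(t) lies on the line L(t) through P(t) perpendicular to P(t) − M, and satisfies the envelope condition for the family L(t): that is, ⟨Δ_u(t) − P(t), P(t) − M⟩ = 0 and ∂/∂t [⟨X − P(t), P(t) − M⟩] evaluated at X = Δ_u(t) equals 0, i.e. ⟨Δ_u(t) − P(t), P'(t)⟩ − ⟨P'(t), P(t) − M⟩ = 0, where P'(t) = (−a sin t, b cos t). Hence Δ_u parametrizes the negative pedal curve of E with respect to the boundary point M. -/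
open Real

/-- Point on the ellipse with semi-axes `a, b`. -/
noncomputable def ellipsePt (a b t : ℝ) : ℝ × ℝ := (a * cos t, b * sin t)

/-- Steiner's Hat: negative pedal curve of the ellipse w.r.t. the boundary point `M = ellipsePt a b u`. -/
noncomputable def steinerHat (a b u t : ℝ) : ℝ × ℝ :=
  (((a ^ 2 - b ^ 2) * (1 + cos (t + u)) * cos t - a ^ 2 * cos u) / a,
   ((a ^ 2 - b ^ 2) * cos t * sin (t + u) - (a ^ 2 - b ^ 2) * sin t - a ^ 2 * sin u) / b)

section NegativePedal

variable {a b : ℝ} (u t : ℝ)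

theorem steinerHat_sub_ellipsePt_inner_chord (ha : a ≠ 0) (hb : b ≠ 0) :
    ((steinerHat a b u t).1 - (ellipsePt a b t).1) * ((ellipsePt a b t).1 - (ellipsePt a b u).1)
      + ((steinerHat a b u t).2 - (ellipsePt a b t).2) * ((ellipsePt a b t).2 - (ellipsePt a b u).2)
      = 0 := by
  simp only [steinerHat, ellipsePt, cos_add, sin_add]
  field_simp
  linear_combination ((a ^ 2 - b ^ 2) * cos t * cos u - a ^ 2) * sin_sq_add_cos_sq t
    + (a ^ 2 - (a ^ 2 - b ^ 2) * cos t ^ 2) * sin_sq_add_cos_sq u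

theorem steinerHat_envelope_condition (ha : a ≠ 0) (hb : b ≠ 0) :
    (((steinerHat a b u t).1 - (ellipsePt a b t).1) * (-(a * sin t))
      + ((steinerHat a b u t).2 - (ellipsePt a b t).2) * (b * cos t))
      - ((-(a * sin t)) * ((ellipsePt a b t).1 - (ellipsePt a b u).1)
        + (b * cos t) * ((ellipsePt a b t).2 - (ellipsePt a b u).2)) = 0 := by
  simp only [steinerHat, ellipsePt, cos_add, sin_add]
  field_simp
  linear_combination (a ^ 2 - b ^ 2) * cos t * sin u * sin_sq_add_cos_sq t

end NegativePedal

/-- `Δ_u(t)` lies on the line `L(t)` through `P(t)` perpendicular to `P(t) − M`,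
and satisfies the envelope condition for the family `L(t)`. -/
theorem stmt0 (a b u : ℝ) (hb : 0 < b) (hab : b < a) :
    ∀ t : ℝ,
      (((steinerHat a b u t).1 - (ellipsePt a b t).1) * ((ellipsePt a b t).1 - (ellipsePt a b u).1)
        + ((steinerHat a b u t).2 - (ellipsePt a b t).2) * ((ellipsePt a b t).2 - (ellipsePt a b u).2) = 0)
      ∧
      ((((steinerHat a b u t).1 - (ellipsePt a b t).1) * (-(a * sin t))
        + ((steinerHat a b u t).2 - (ellipsePt a b t).2) * (b * cos t))
        - ((-(a * sin t)) * ((ellipsePt a b t).1 - (ellipsePt a b u).1)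
          + (b * cos t) * ((ellipsePt a b t).2 - (ellipsePt a b u).2)) = 0) := by
  have ha : a ≠ 0 := (hb.trans hab).ne'
  exact fun t => ⟨steinerHat_sub_ellipsePt_inner_chord u t ha hb.ne',
    steinerHat_envelope_condition u t ha hb.ne'⟩
end

section
/- Steiner's Hat is the image of the 3-cusped Steiner hypocycloid under an affine transformation (a rotation, followed by a homothety, an axes-scaling, and a translation). Precisely: for all t ∈ ℝ, Δ_u(t) = C̄ + ( (c²/(2a))·w₁(t), (c²/(2b))·w₂(t) ), where (w₁(t), w₂(t)) = (2 cos t + cos(2t+u), −2 sin t + sin(2t+u)); moreover (w₁(t), w₂(t)) = R_{u/3}( S(t + u/3) ), where S(s) = (2 cos s + cos 2s, −2 sin s + sin 2s) is the Steiner hypocycloid and R_{u/3} is the counterclockwise rotation of ℝ² by angle u/3. -/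
open Real

/-- The Steiner hypocycloid. -/
noncomputable def steinerCurve (s : ℝ) : ℝ × ℝ :=
  (2 * cos s + cos (2 * s), -(2 * sin s) + sin (2 * s))

/-- Counterclockwise rotation of ℝ² by angle `φ`. -/
noncomputable def rot (φ : ℝ) (v : ℝ × ℝ) : ℝ × ℝ :=
  (cos φ * v.1 - sin φ * v.2, sin φ * v.1 + cos φ * v.2)

/-!
Both identities are trigonometric bookkeeping. The product-to-sum formulas
`2 cos (t+u) cos t = cos u + cos (2t+u)` and `2 sin (t+u) cos t = sin u + sin (2t+u)` make each
coordinate of `Δ_u` linear in the harmonics `cos t, sin t` and `cos (2t+u), sin (2t+u)`. Rotating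
`S(s)` by `φ` shifts the phase of its first harmonic by `-φ` and of its second harmonic by `+φ`;
with `s = t + u/3` and `φ = u/3` these phases become `t` and `2t + u`.
-/

lemma div_eq_div_two_mul_add_div_two_mul_mul {K : Type*} [Field K] [NeZero (2 : K)]
    {x y z w : K} (a : K) (h : 2 * x = y + z * w) :
    x / a = y / (2 * a) + z / (2 * a) * w := by
  rw [div_mul_eq_mul_div, ← add_div, ← h, mul_div_mul_left _ _ (NeZero.ne 2)]

lemma rot_steinerCurve (φ s : ℝ) :
    rot φ (steinerCurve s) =
      (2 * cos (s - φ) + cos (2 * s + φ), -(2 * sin (s - φ)) + sin (2 * s + φ)) := by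
  simp only [rot, steinerCurve, cos_sub, sin_sub, cos_add, sin_add, Prod.mk.injEq]
  constructor <;> ring

lemma steinerHat_eq (a b u t : ℝ) :
    steinerHat a b u t =
      (-((a ^ 2 + b ^ 2) * cos u) / (2 * a)
          + (a ^ 2 - b ^ 2) / (2 * a) * (2 * cos t + cos (2 * t + u)),
        -((a ^ 2 + b ^ 2) * sin u) / (2 * b)
          + (a ^ 2 - b ^ 2) / (2 * b) * (-(2 * sin t) + sin (2 * t + u))) := by
  have hcos : 2 * cos (t + u) * cos t = cos u + cos (2 * t + u) := by
    rw [two_mul_cos_mul_cos]; ring_nf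
  have hsin : 2 * sin (t + u) * cos t = sin u + sin (2 * t + u) := by
    rw [two_mul_sin_mul_cos]; ring_nf
  simp only [steinerHat, Prod.mk.injEq]
  constructor <;> apply div_eq_div_two_mul_add_div_two_mul_mul
  · linear_combination (a ^ 2 - b ^ 2) * hcos
  · linear_combination (a ^ 2 - b ^ 2) * hsin

theorem stmt1_general (a b u : ℝ)
    (w : ℝ → ℝ × ℝ)
    (hw : ∀ t : ℝ, w t = (2 * cos t + cos (2 * t + u), -(2 * sin t) + sin (2 * t + u))) :
    ∀ t : ℝ,
      steinerHat a b u t =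
        (-((a ^ 2 + b ^ 2) * cos u) / (2 * a) + (a ^ 2 - b ^ 2) / (2 * a) * (w t).1,
         -((a ^ 2 + b ^ 2) * sin u) / (2 * b) + (a ^ 2 - b ^ 2) / (2 * b) * (w t).2)
      ∧ w t = rot (u / 3) (steinerCurve (t + u / 3)) := by
  intro t
  refine ⟨by rw [hw, steinerHat_eq], ?_⟩
  rw [hw, rot_steinerCurve, show t + u / 3 - u / 3 = t by ring,
    show 2 * (t + u / 3) + u / 3 = 2 * t + u by ring]

/-- Steiner's Hat is the image of the 3-cusped Steiner hypocycloid under an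
affine transformation (rotation, homothety, axes-scaling, translation). -/
theorem stmt1 (a b u : ℝ) (hb : 0 < b) (hab : b < a)
    (w : ℝ → ℝ × ℝ)
    (hw : ∀ t : ℝ, w t = (2 * cos t + cos (2 * t + u), -(2 * sin t) + sin (2 * t + u))) :
    ∀ t : ℝ,
      steinerHat a b u t =
        (-((a ^ 2 + b ^ 2) * cos u) / (2 * a) + (a ^ 2 - b ^ 2) / (2 * a) * (w t).1,
         -((a ^ 2 + b ^ 2) * sin u) / (2 * b) + (a ^ 2 - b ^ 2) / (2 * b) * (w t).2)
      ∧ w t = rot (u / 3) (steinerCurve (t + u / 3)) :=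
  stmt1_general a b u w hw
end

section
/- The area of Steiner's Hat is invariant over the choice of the boundary point M: the signed area of Δ_u, namely (1/2)∫₀^{2π} (x_u(t)·y_u'(t) − y_u(t)·x_u'(t)) dt, has absolute value equal to π c⁴/(2ab), independently of u. -/
open Real

/-!
Up to a translation and the linear map `diag (1/a, 1/b)`, Steiner's hat is the deltoid
`t ↦ c² (e^{-it} + ½ e^{i(2t+u)})`. A translation does not change the integral of
`x dy - y dx` over a closed curve, the linear map divides it by `ab`, and for the deltoid the
integrand is `c⁴ (cos (3t+u) - 1) / 2`, whose integral over a period is `-π c⁴`.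
-/

noncomputable def areaForm (γ : ℝ → ℝ × ℝ) (t : ℝ) : ℝ :=
  (γ t).1 * deriv (fun s => (γ s).2) t - (γ t).2 * deriv (fun s => (γ s).1) t

theorem areaForm_affine (γ : ℝ → ℝ × ℝ) (p q a b t : ℝ) :
    areaForm (fun s => (((γ s).1 - p) / a, ((γ s).2 - q) / b)) t
      = (areaForm γ t - (p * deriv (fun s => (γ s).2) t - q * deriv (fun s => (γ s).1) t))
          / (a * b) := by
  simp only [areaForm, deriv_div_const, deriv_sub_const]
  ring

theorem continuous_areaForm {γ : ℝ → ℝ × ℝ} (hγ : ContDiff ℝ 1 γ) :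
    Continuous (areaForm γ) := by
  have hx' := hγ.fst.continuous_deriv le_rfl
  have hy' := hγ.snd.continuous_deriv le_rfl
  unfold areaForm
  fun_prop

theorem integral_areaForm_affine {γ : ℝ → ℝ × ℝ} (hγ : ContDiff ℝ 1 γ) {t₀ t₁ : ℝ}
    (hclosed : γ t₀ = γ t₁) (p q a b : ℝ) :
    ∫ t in t₀..t₁, areaForm (fun s => (((γ s).1 - p) / a, ((γ s).2 - q) / b)) t
      = (∫ t in t₀..t₁, areaForm γ t) / (a * b) := by
  have hx := hγ.fst
  have hy := hγ.snd
  have hx' := hx.continuous_deriv le_rfl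
  have hy' := hy.continuous_deriv le_rfl
  have htranslation :
      ∫ t in t₀..t₁, (p * deriv (fun s => (γ s).2) t - q * deriv (fun s => (γ s).1) t) = 0 := by
    rw [intervalIntegral.integral_eq_sub_of_hasDerivAt
      (f := fun s => p * (γ s).2 - q * (γ s).1)
      (fun t _ => ((hy.differentiable one_ne_zero t).hasDerivAt.const_mul p).sub
        ((hx.differentiable one_ne_zero t).hasDerivAt.const_mul q))
      (by apply Continuous.intervalIntegrable; fun_prop), hclosed, sub_self]
  simp only [areaForm_affine, intervalIntegral.integral_div]
  rw [intervalIntegral.integral_sub ((continuous_areaForm hγ).intervalIntegrable _ _)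
    (by apply Continuous.intervalIntegrable; fun_prop), htranslation, sub_zero]

theorem integral_cos_nat_mul_add {n : ℕ} (hn : n ≠ 0) (φ : ℝ) :
    ∫ t in (0 : ℝ)..2 * π, cos (n * t + φ) = 0 := by
  have hn' : (n : ℝ) ≠ 0 := Nat.cast_ne_zero.mpr hn
  have hperiod : sin (n * (2 * π) + φ) = sin φ := by
    rw [add_comm]
    exact sin_periodic.nat_mul n φ
  rw [intervalIntegral.integral_comp_mul_add (fun t => cos t) hn', integral_cos, mul_zero,
    zero_add, hperiod, sub_self, smul_zero]

noncomputable def deltoid (k u t : ℝ) : ℝ × ℝ :=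
  (k * (cos t + cos (2 * t + u) / 2), k * (-sin t + sin (2 * t + u) / 2))

section Deltoid

variable (k u : ℝ)

theorem contDiff_deltoid : ContDiff ℝ 1 (deltoid k u) := by
  unfold deltoid
  fun_prop

theorem deltoid_periodic : Function.Periodic (deltoid k u) (2 * π) := by
  intro t
  have h : 2 * (t + 2 * π) + u = 2 * t + u + 2 * π + 2 * π := by ring
  simp only [deltoid, h, sin_add_two_pi, cos_add_two_pi]

theorem hasDerivAt_deltoid_fst (t : ℝ) :
    HasDerivAt (fun s => (deltoid k u s).1) (-k * (sin t + sin (2 * t + u))) t := by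
  have h := ((hasDerivAt_cos t).add
    ((((hasDerivAt_id t).const_mul 2).add_const u).cos.div_const 2)).const_mul k
  exact h.congr_deriv (by simp only [id]; ring)

theorem hasDerivAt_deltoid_snd (t : ℝ) :
    HasDerivAt (fun s => (deltoid k u s).2) (k * (-cos t + cos (2 * t + u))) t := by
  have h := ((hasDerivAt_sin t).neg.add
    ((((hasDerivAt_id t).const_mul 2).add_const u).sin.div_const 2)).const_mul k
  exact h.congr_deriv (by simp only [id]; ring)

theorem areaForm_deltoid (t : ℝ) :
    areaForm (deltoid k u) t = k ^ 2 / 2 * (cos (3 * t + u) - 1) := by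
  rw [areaForm, (hasDerivAt_deltoid_fst k u t).deriv, (hasDerivAt_deltoid_snd k u t).deriv,
    show 3 * t + u = t + (2 * t + u) by ring, cos_add t (2 * t + u)]
  simp only [deltoid]
  linear_combination (-k ^ 2) * sin_sq_add_cos_sq t + k ^ 2 / 2 * sin_sq_add_cos_sq (2 * t + u)

theorem integral_areaForm_deltoid :
    ∫ t in (0 : ℝ)..2 * π, areaForm (deltoid k u) t = -π * k ^ 2 := by
  have hcos : ∫ t in (0 : ℝ)..2 * π, cos (3 * t + u) = 0 := by
    exact_mod_cast integral_cos_nat_mul_add three_ne_zero u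
  simp only [areaForm_deltoid]
  rw [intervalIntegral.integral_const_mul, intervalIntegral.integral_sub
    (by apply Continuous.intervalIntegrable; fun_prop) intervalIntegrable_const, hcos,
    intervalIntegral.integral_const, smul_eq_mul]
  ring

end Deltoid

theorem steinerHat_eq_affine_deltoid (a b u : ℝ) :
    steinerHat a b u = fun t =>
      (((deltoid (a ^ 2 - b ^ 2) u t).1 - (a ^ 2 + b ^ 2) / 2 * cos u) / a,
       ((deltoid (a ^ 2 - b ^ 2) u t).2 - (a ^ 2 + b ^ 2) / 2 * sin u) / b) := by
  funext t
  simp only [steinerHat, deltoid, cos_add, sin_add, cos_two_mul, sin_two_mul]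
  ext <;> ring

theorem integral_areaForm_steinerHat (a b u : ℝ) :
    ∫ t in (0 : ℝ)..2 * π, areaForm (steinerHat a b u) t = -π * (a ^ 2 - b ^ 2) ^ 2 / (a * b) := by
  rw [steinerHat_eq_affine_deltoid, integral_areaForm_affine (contDiff_deltoid _ u)
    (deltoid_periodic _ u).eq.symm, integral_areaForm_deltoid]

/-- the (absolute value of the) signed area of Steiner's Hat equals
`π c⁴ / (2ab)`, independently of `u`. -/
theorem stmt2 (a b u : ℝ) (hb : 0 < b) (hab : b < a) :
    |(1 / 2) * ∫ t in (0:ℝ)..(2 * π),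
        ((steinerHat a b u t).1 * deriv (fun s => (steinerHat a b u s).2) t
          - (steinerHat a b u t).2 * deriv (fun s => (steinerHat a b u s).1) t)|
      = π * (a ^ 2 - b ^ 2) ^ 2 / (2 * a * b) := by
  have ha : 0 < a := hb.trans hab
  change |1 / 2 * ∫ t in (0 : ℝ)..2 * π, areaForm (steinerHat a b u) t| = _
  rw [integral_areaForm_steinerHat,
    show 1 / 2 * (-π * (a ^ 2 - b ^ 2) ^ 2 / (a * b)) = -(π * (a ^ 2 - b ^ 2) ^ 2 / (2 * a * b))
      by ring,
    abs_neg, abs_of_nonneg (by positivity)]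
end

section
/- The derivative of Δ_u vanishes exactly at the three cusp parameters: for all t ∈ ℝ, Δ_u'(t) = (0,0) if and only if t = −u/3 + 2πk/3 for some integer k. -/
open Real

/-! The derivative of `Δ_u` is `(-(c²/a) (sin (2t+u) + sin t), (c²/b) (cos (2t+u) - cos t))`.
Since `c ≠ 0`, it vanishes iff `(cos (2t+u), sin (2t+u)) = (cos t, -sin t)`, i.e. iff
`2t + u ≡ -t (mod 2π)`, i.e. iff `3t + u ∈ 2πℤ`. -/

theorem Real.cos_eq_cos_and_sin_eq_neg_sin_iff (α β : ℝ) :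
    cos α = cos β ∧ sin α = -sin β ↔ ∃ k : ℤ, k * (2 * π) = α + β := by
  rw [← cos_eq_one_iff]
  constructor
  · rintro ⟨hcos, hsin⟩
    rw [cos_add, hcos, hsin]
    nlinarith [sin_sq_add_cos_sq β]
  · rw [cos_eq_one_iff]
    rintro ⟨k, hk⟩
    rw [eq_sub_of_add_eq hk.symm, cos_int_mul_two_pi_sub, sin_int_mul_two_pi_sub]
    exact ⟨rfl, rfl⟩

theorem hasDerivAt_steinerHat_fst (a b u t : ℝ) :
    HasDerivAt (fun s => (steinerHat a b u s).1)
      (-(a ^ 2 - b ^ 2) * (sin (2 * t + u) + sin t) / a) t := by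
  have hcos : HasDerivAt (fun s => cos (s + u)) (-sin (t + u)) t :=
    (hasDerivAt_cos (t + u)).comp_add_const t u
  refine ((((hcos.const_add 1).const_mul (a ^ 2 - b ^ 2)).mul
    (hasDerivAt_cos t)).sub_const (a ^ 2 * cos u) |>.div_const a).congr_deriv ?_
  rw [show sin (2 * t + u) = sin ((t + u) + t) by ring_nf, sin_add (t + u) t]
  ring

theorem hasDerivAt_steinerHat_snd (a b u t : ℝ) :
    HasDerivAt (fun s => (steinerHat a b u s).2)
      ((a ^ 2 - b ^ 2) * (cos (2 * t + u) - cos t) / b) t := by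
  have hsin : HasDerivAt (fun s => sin (s + u)) (cos (t + u)) t :=
    (hasDerivAt_sin (t + u)).comp_add_const t u
  refine ((((((hasDerivAt_cos t).const_mul (a ^ 2 - b ^ 2)).mul hsin).sub
    ((hasDerivAt_sin t).const_mul (a ^ 2 - b ^ 2))).sub_const (a ^ 2 * sin u)).div_const
    b).congr_deriv ?_
  rw [show cos (2 * t + u) = cos ((t + u) + t) by ring_nf, cos_add (t + u) t]
  ring

/-- the derivative of `Δ_u` vanishes exactly at the three cusp parameters
`t = −u/3 + 2πk/3`, `k ∈ ℤ`. -/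
theorem stmt4 (a b u : ℝ) (hb : 0 < b) (hab : b < a) :
    ∀ t : ℝ,
      (deriv (fun s => (steinerHat a b u s).1) t = 0 ∧
       deriv (fun s => (steinerHat a b u s).2) t = 0)
      ↔ ∃ k : ℤ, t = -u / 3 + 2 * π * (k : ℝ) / 3 := by
  intro t
  have ha : a ≠ 0 := (hb.trans hab).ne'
  have hc : a ^ 2 - b ^ 2 ≠ 0 := by nlinarith
  rw [(hasDerivAt_steinerHat_fst a b u t).deriv, (hasDerivAt_steinerHat_snd a b u t).deriv]
  simp only [div_eq_zero_iff, mul_eq_zero, neg_eq_zero, ha, hb.ne', hc, or_false, false_or,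
    add_eq_zero_iff_eq_neg, sub_eq_zero]
  rw [and_comm, Real.cos_eq_cos_and_sin_eq_neg_sin_iff]
  refine exists_congr fun k => ?_
  constructor <;> intro h <;> linarith
end

section
/- The circle through M, P₁ and the cusp P₁' osculates the ellipse E at P₁, and its center lies on the evolute of E. Precisely, let P₁'' = (c² cos³(u/3)/a, c² sin³(u/3)/b) and r² = |P₁ − P₁''|². Then |M − P₁''|² = r², |P₁' − P₁''|² = r², and the function g(t) = |P(t) − P₁''|² − r² satisfies g(t₁) = 0, g'(t₁) = 0 and g''(t₁) = 0 at t₁ = −u/3 (third-order contact of the circle with E at P₁). -/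
open Real

/-- Squared distance in ℝ². -/
def sqDist (p q : ℝ × ℝ) : ℝ := (p.1 - q.1) ^ 2 + (p.2 - q.2) ^ 2

/-! The osculating circle of the ellipse at `P(t)` is centred at the evolute point `E*(t)`; it
meets the ellipse again at `P(-3t)`, and the cusp of Steiner's hat `Δ_{-3t}(t)` is the point of
that circle diametrically opposite to `P(-3t)`. -/

noncomputable def evolutePt (a b t : ℝ) : ℝ × ℝ :=
  ((a ^ 2 - b ^ 2) * cos t ^ 3 / a, -(a ^ 2 - b ^ 2) * sin t ^ 3 / b)

theorem sqDist_eq_of_add_eq_two_smul {p p' q : ℝ × ℝ} (h : p + p' = (2 : ℝ) • q) :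
    sqDist p' q = sqDist p q := by
  obtain ⟨h₁, h₂⟩ := Prod.ext_iff.mp h
  simp only [Prod.fst_add, Prod.snd_add, Prod.smul_fst, Prod.smul_snd, smul_eq_mul] at h₁ h₂
  unfold sqDist
  linear_combination (p'.1 - p.1) * h₁ + (p'.2 - p.2) * h₂

theorem hasDerivAt_sqDist_ellipsePt (a b : ℝ) (C : ℝ × ℝ) (t : ℝ) :
    HasDerivAt (fun t => sqDist (ellipsePt a b t) C)
      (2 * (a * C.1 * sin t - b * C.2 * cos t) - (a ^ 2 - b ^ 2) * sin (2 * t)) t := by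
  have h := ((((hasDerivAt_cos t).const_mul a).sub_const C.1).pow 2).add
    ((((hasDerivAt_sin t).const_mul b).sub_const C.2).pow 2)
  refine h.congr_deriv ?_
  rw [sin_two_mul]
  ring

theorem deriv_sqDist_ellipsePt (a b : ℝ) (C : ℝ × ℝ) :
    deriv (fun t => sqDist (ellipsePt a b t) C) =
      fun t => 2 * (a * C.1 * sin t - b * C.2 * cos t) - (a ^ 2 - b ^ 2) * sin (2 * t) :=
  funext fun t => (hasDerivAt_sqDist_ellipsePt a b C t).deriv

theorem deriv_deriv_sqDist_ellipsePt (a b : ℝ) (C : ℝ × ℝ) (t : ℝ) :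
    deriv (deriv fun t => sqDist (ellipsePt a b t) C) t =
      2 * (a * C.1 * cos t + b * C.2 * sin t) - 2 * (a ^ 2 - b ^ 2) * cos (2 * t) := by
  rw [deriv_sqDist_ellipsePt]
  have h := ((((hasDerivAt_sin t).const_mul (a * C.1)).sub
    ((hasDerivAt_cos t).const_mul (b * C.2))).const_mul 2).sub
    (((hasDerivAt_id t).const_mul 2).sin.const_mul (a ^ 2 - b ^ 2))
  refine (h.congr_deriv ?_).deriv
  simp only [id]
  ring

section

variable {a b : ℝ} (ha : a ≠ 0) (hb : b ≠ 0) (t : ℝ)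
include ha hb

theorem deriv_sqDist_ellipsePt_evolutePt_self :
    deriv (fun s => sqDist (ellipsePt a b s) (evolutePt a b t)) t = 0 := by
  simp only [deriv_sqDist_ellipsePt, evolutePt, sin_two_mul]
  field_simp
  linear_combination 2 * (a ^ 2 - b ^ 2) * sin t * cos t * sin_sq_add_cos_sq t

theorem deriv_deriv_sqDist_ellipsePt_evolutePt_self :
    deriv (deriv fun s => sqDist (ellipsePt a b s) (evolutePt a b t)) t = 0 := by
  simp only [deriv_deriv_sqDist_ellipsePt, evolutePt, cos_two_mul]
  field_simp
  linear_combination 2 * (a ^ 2 - b ^ 2) * (cos t ^ 2 - sin t ^ 2 - 1) * sin_sq_add_cos_sq t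

theorem sqDist_ellipsePt_neg_three_mul_evolutePt :
    sqDist (ellipsePt a b (-3 * t)) (evolutePt a b t) =
      sqDist (ellipsePt a b t) (evolutePt a b t) := by
  simp only [sqDist, ellipsePt, evolutePt, neg_mul, cos_neg, sin_neg, cos_three_mul,
    sin_three_mul]
  field_simp
  linear_combination 8 * a ^ 2 * b ^ 2 *
    (a ^ 2 * (sin t ^ 4 - sin t ^ 2 * cos t ^ 2 + cos t ^ 4 - cos t ^ 2) +
      b ^ 2 * (sin t ^ 4 - sin t ^ 2 * cos t ^ 2 + cos t ^ 4 - sin t ^ 2)) * sin_sq_add_cos_sq t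

theorem ellipsePt_neg_three_mul_add_steinerHat :
    ellipsePt a b (-3 * t) + steinerHat a b (-3 * t) t = (2 : ℝ) • evolutePt a b t := by
  have h2t : t + -3 * t = -(2 * t) := by ring
  rw [steinerHat, h2t, neg_mul]
  refine Prod.ext ?_ ?_ <;>
    simp only [ellipsePt, evolutePt, Prod.fst_add, Prod.snd_add, Prod.smul_fst,
      Prod.smul_snd, smul_eq_mul, cos_neg, sin_neg, cos_three_mul, sin_three_mul,
      cos_two_mul, sin_two_mul] <;>
    field_simp
  · ring
  · linear_combination -2 * sin t * (a ^ 2 - b ^ 2) * sin_sq_add_cos_sq t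

end

/-- the circle through `M`, `P₁` and the cusp `P₁'`, centered at the evolute
point `P₁'' = (c² cos³(u/3)/a, c² sin³(u/3)/b)`, osculates the ellipse at `P₁`
(third-order contact). -/
theorem stmt6 (a b u : ℝ) (hb : 0 < b) (hab : b < a)
    (M P₁ P₁' P₁'' : ℝ × ℝ) (r2 : ℝ) (g : ℝ → ℝ)
    (hM : M = ellipsePt a b u)
    (hP₁ : P₁ = ellipsePt a b (-u / 3))
    (hP₁' : P₁' = steinerHat a b u (-u / 3))
    (hP₁'' : P₁'' = ((a ^ 2 - b ^ 2) * (cos (u / 3)) ^ 3 / a,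
                     (a ^ 2 - b ^ 2) * (sin (u / 3)) ^ 3 / b))
    (hr2 : r2 = sqDist P₁ P₁'')
    (hg : g = fun t => sqDist (ellipsePt a b t) P₁'' - r2) :
    sqDist M P₁'' = r2 ∧
    sqDist P₁' P₁'' = r2 ∧
    g (-u / 3) = 0 ∧
    deriv g (-u / 3) = 0 ∧
    deriv (deriv g) (-u / 3) = 0 := by
  have ha : a ≠ 0 := (hb.trans hab).ne'
  obtain ⟨t, rfl⟩ : ∃ t, u = -3 * t := ⟨-u / 3, by ring⟩
  have hC : P₁'' = evolutePt a b t := by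
    rw [hP₁'', show -3 * t / 3 = -t by ring, cos_neg, sin_neg, evolutePt]
    ring_nf
  rw [show -(-3 * t) / 3 = t by ring] at hP₁ hP₁' ⊢
  subst hM hP₁ hP₁' hC hr2 hg
  refine ⟨sqDist_ellipsePt_neg_three_mul_evolutePt ha hb.ne' t, ?_, sub_self _, ?_, ?_⟩
  · rw [sqDist_eq_of_add_eq_two_smul (ellipsePt_neg_three_mul_add_steinerHat ha hb.ne' t),
      sqDist_ellipsePt_neg_three_mul_evolutePt ha hb.ne' t]
  · rw [deriv_sub_const]
    exact deriv_sqDist_ellipsePt_evolutePt_self ha hb.ne' t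
  · rw [deriv_sub_const_fun]
    exact deriv_deriv_sqDist_ellipsePt_evolutePt_self ha hb.ne' t
end

section
/- The area of the cusp triangle T' = P₁'P₂'P₃' is invariant over M and equals 27√3·c⁴/(16ab): with P_i' = (x_i', y_i'), one has (1/2)·|x₁'(y₂' − y₃') + x₂'(y₃' − y₁') + x₃'(y₁' − y₂')| = 27√3·c⁴/(16ab) for every u. -/
open Real

/-!
Product-to-sum turns `Δ_u(t)` into the image of `cos t + cos (2t + u) / 2` and
`sin (2t + u) / 2 - sin t` under a fixed affine map `(x, y) ↦ (c² x / a + x₀, c² y / b + y₀)`.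
At a cusp `3t + u ∈ 2πℤ`, so `2t + u ≡ -t` and that point is `(3/2) (cos t, -sin t)`: the three
cusps are the image of an equilateral triangle inscribed in the circle of radius `3/2`, whose
area `27√3/16` is scaled by the determinant `c⁴/(ab)` of the affine map.
-/

/-- Twice the signed area of the triangle `PQR`. -/
def shoelace (P Q R : ℝ × ℝ) : ℝ :=
  P.1 * (Q.2 - R.2) + Q.1 * (R.2 - P.2) + R.1 * (P.2 - Q.2)

lemma shoelace_affine (α β x₀ y₀ x₁ y₁ x₂ y₂ x₃ y₃ : ℝ) :
    shoelace (α * x₁ + x₀, β * y₁ + y₀) (α * x₂ + x₀, β * y₂ + y₀) (α * x₃ + x₀, β * y₃ + y₀)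
      = α * β * shoelace (x₁, y₁) (x₂, y₂) (x₃, y₃) := by
  simp only [shoelace]
  ring

lemma shoelace_unit_circle (α β γ : ℝ) :
    shoelace (cos α, sin α) (cos β, sin β) (cos γ, sin γ)
      = sin (β - α) + sin (γ - β) + sin (α - γ) := by
  simp only [shoelace, sin_sub]
  ring

lemma shoelace_equilateral (α : ℝ) :
    shoelace (cos α, sin α) (cos (α - 2 * π / 3), sin (α - 2 * π / 3))
      (cos (α - 4 * π / 3), sin (α - 4 * π / 3)) = -(3 * √3 / 2) := by
  have h₁ : sin (-(2 * π / 3)) = -(√3 / 2) := by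
    rw [sin_neg, show 2 * π / 3 = π - π / 3 by ring, sin_pi_sub, sin_pi_div_three]
  have h₂ : sin (4 * π / 3) = -(√3 / 2) := by
    rw [show 4 * π / 3 = π / 3 + π by ring, sin_add_pi, sin_pi_div_three]
  rw [shoelace_unit_circle, show α - 2 * π / 3 - α = -(2 * π / 3) by ring,
    show α - 4 * π / 3 - (α - 2 * π / 3) = -(2 * π / 3) by ring,
    show α - (α - 4 * π / 3) = 4 * π / 3 by ring, h₁, h₂]
  ring

lemma steinerHat_eq_affine (a b u t : ℝ) :
    steinerHat a b u t =
      ((a ^ 2 - b ^ 2) / a * (cos t + cos (2 * t + u) / 2)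
          + ((a ^ 2 - b ^ 2) / 2 - a ^ 2) * cos u / a,
        (a ^ 2 - b ^ 2) / b * (sin (2 * t + u) / 2 - sin t)
          + ((a ^ 2 - b ^ 2) / 2 - a ^ 2) * sin u / b) := by
  have hcos : cos (2 * t + u) + cos u = 2 * cos (t + u) * cos t := by
    rw [cos_add_cos, show (2 * t + u + u) / 2 = t + u by ring, show (2 * t + u - u) / 2 = t by ring]
  have hsin : sin (2 * t + u) + sin u = 2 * sin (t + u) * cos t := by
    rw [sin_add_sin, show (2 * t + u + u) / 2 = t + u by ring, show (2 * t + u - u) / 2 = t by ring]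
  rw [eq_sub_of_add_eq hcos, eq_sub_of_add_eq hsin, steinerHat]
  ext <;> ring

lemma steinerHat_cusp (a b u t : ℝ) (n : ℤ) (hcusp : 3 * t + u = n * (2 * π)) :
    steinerHat a b u t =
      (3 * (a ^ 2 - b ^ 2) / (2 * a) * cos t + ((a ^ 2 - b ^ 2) / 2 - a ^ 2) * cos u / a,
        -(3 * (a ^ 2 - b ^ 2) / (2 * b)) * sin t
          + ((a ^ 2 - b ^ 2) / 2 - a ^ 2) * sin u / b) := by
  have hfold : 2 * t + u = -t + n * (2 * π) := by linarith
  rw [steinerHat_eq_affine, hfold, cos_add_int_mul_two_pi, sin_add_int_mul_two_pi, cos_neg,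
    sin_neg]
  ext <;> ring

/-- the area of the cusp triangle `T' = P₁'P₂'P₃'` is invariant over `M`
and equals `27√3 c⁴/(16ab)`. -/
theorem stmt7 (a b u : ℝ) (hb : 0 < b) (hab : b < a)
    (P₁' P₂' P₃' : ℝ × ℝ)
    (hP₁' : P₁' = steinerHat a b u (-u / 3))
    (hP₂' : P₂' = steinerHat a b u (-u / 3 - 2 * π / 3))
    (hP₃' : P₃' = steinerHat a b u (-u / 3 - 4 * π / 3)) :
    (1 / 2) * |P₁'.1 * (P₂'.2 - P₃'.2) + P₂'.1 * (P₃'.2 - P₁'.2) + P₃'.1 * (P₁'.2 - P₂'.2)|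
      = 27 * Real.sqrt 3 * (a ^ 2 - b ^ 2) ^ 2 / (16 * a * b) := by
  have ha : 0 < a := hb.trans hab
  rw [hP₁', hP₂', hP₃', steinerHat_cusp a b u _ 0 (by push_cast; ring),
    steinerHat_cusp a b u _ (-1) (by push_cast; ring),
    steinerHat_cusp a b u _ (-2) (by push_cast; ring)]
  change 1 / 2 * |shoelace _ _ _| = _
  rw [shoelace_affine, shoelace_equilateral]
  have hArea : 3 * (a ^ 2 - b ^ 2) / (2 * a) * -(3 * (a ^ 2 - b ^ 2) / (2 * b)) * -(3 * √3 / 2)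
      = 27 * √3 * (a ^ 2 - b ^ 2) ^ 2 / (8 * a * b) := by
    field_simp
    ring
  rw [hArea, abs_of_nonneg (by positivity)]
  ring
end

section
/- The barycenter of the cusp triangle T' coincides with the center of area of Steiner's Hat: (P₁' + P₂' + P₃')/3 = C̄ = (−(a²+b²) cos u/(2a), −(a²+b²) sin u/(2b)). -/
open Real

/-!
Product-to-sum turns each coordinate of `Δ_u(t)` into a constant plus a combination of
`cos t, cos (2t + u)` (resp. `sin t, sin (2t + u)`). The three cusp parameters are equally spaced
by `2π/3`, hence so are their doubles modulo `2π`, and the cosines (sines) of three equally spaced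
angles sum to zero. Only the constants survive, and they give `C̄`; this works for any starting
angle `θ`, not only `θ = -u/3`.
-/

theorem cos_add_cos_sub_two_pi_div_three_add_cos_sub_four_pi_div_three (θ : ℝ) :
    cos θ + cos (θ - 2 * π / 3) + cos (θ - 4 * π / 3) = 0 := by
  rw [add_assoc, cos_add_cos, show (θ - 2 * π / 3 + (θ - 4 * π / 3)) / 2 = θ - π by ring,
    show (θ - 2 * π / 3 - (θ - 4 * π / 3)) / 2 = π / 3 by ring, cos_sub_pi, cos_pi_div_three]
  ring

theorem sin_add_sin_sub_two_pi_div_three_add_sin_sub_four_pi_div_three (θ : ℝ) :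
    sin θ + sin (θ - 2 * π / 3) + sin (θ - 4 * π / 3) = 0 := by
  rw [add_assoc, sin_add_sin, show (θ - 2 * π / 3 + (θ - 4 * π / 3)) / 2 = θ - π by ring,
    show (θ - 2 * π / 3 - (θ - 4 * π / 3)) / 2 = π / 3 by ring, sin_sub_pi, cos_pi_div_three]
  ring

theorem sum_one_add_cos_add_mul_cos (u θ : ℝ) :
    (1 + cos (θ + u)) * cos θ + (1 + cos (θ - 2 * π / 3 + u)) * cos (θ - 2 * π / 3)
      + (1 + cos (θ - 4 * π / 3 + u)) * cos (θ - 4 * π / 3) = 3 / 2 * cos u := by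
  have h (t : ℝ) : (1 + cos (t + u)) * cos t = cos t + (cos u + cos (2 * t + u)) / 2 := by
    have := two_mul_cos_mul_cos (t + u) t
    rw [show t + u - t = u by ring, show t + u + t = 2 * t + u by ring] at this
    linarith
  have h₂ : cos (2 * (θ - 2 * π / 3) + u) = cos ((2 * θ + u) - 4 * π / 3) := by
    congr 1; ring
  have h₃ : cos (2 * (θ - 4 * π / 3) + u) = cos ((2 * θ + u) - 2 * π / 3) := by
    rw [← cos_sub_two_pi (2 * θ + u - 2 * π / 3)]; congr 1; ring
  rw [h, h, h, h₂, h₃]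
  linarith [cos_add_cos_sub_two_pi_div_three_add_cos_sub_four_pi_div_three θ,
    cos_add_cos_sub_two_pi_div_three_add_cos_sub_four_pi_div_three (2 * θ + u)]

theorem sum_cos_mul_sin_add_sub_sin (u θ : ℝ) :
    (cos θ * sin (θ + u) - sin θ)
      + (cos (θ - 2 * π / 3) * sin (θ - 2 * π / 3 + u) - sin (θ - 2 * π / 3))
      + (cos (θ - 4 * π / 3) * sin (θ - 4 * π / 3 + u) - sin (θ - 4 * π / 3)) = 3 / 2 * sin u := by
  have h (t : ℝ) : cos t * sin (t + u) = (sin u + sin (2 * t + u)) / 2 := by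
    have := two_mul_sin_mul_cos (t + u) t
    rw [show t + u - t = u by ring, show t + u + t = 2 * t + u by ring] at this
    linarith
  have h₂ : sin (2 * (θ - 2 * π / 3) + u) = sin ((2 * θ + u) - 4 * π / 3) := by
    congr 1; ring
  have h₃ : sin (2 * (θ - 4 * π / 3) + u) = sin ((2 * θ + u) - 2 * π / 3) := by
    rw [← sin_sub_two_pi (2 * θ + u - 2 * π / 3)]; congr 1; ring
  rw [h, h, h, h₂, h₃]
  linarith [sin_add_sin_sub_two_pi_div_three_add_sin_sub_four_pi_div_three θ,
    sin_add_sin_sub_two_pi_div_three_add_sin_sub_four_pi_div_three (2 * θ + u)]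

theorem steinerHat_barycenter (a b u θ : ℝ) :
    (((steinerHat a b u θ).1 + (steinerHat a b u (θ - 2 * π / 3)).1
        + (steinerHat a b u (θ - 4 * π / 3)).1) / 3,
      ((steinerHat a b u θ).2 + (steinerHat a b u (θ - 2 * π / 3)).2
        + (steinerHat a b u (θ - 4 * π / 3)).2) / 3)
      = (-((a ^ 2 + b ^ 2) * cos u) / (2 * a), -((a ^ 2 + b ^ 2) * sin u) / (2 * b)) := by
  simp only [steinerHat, Prod.mk.injEq]
  constructor
  · linear_combination (a ^ 2 - b ^ 2) / (3 * a) * sum_one_add_cos_add_mul_cos u θ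
  · linear_combination (a ^ 2 - b ^ 2) / (3 * b) * sum_cos_mul_sin_add_sub_sin u θ

theorem stmt8_general (a b u : ℝ)
    (P₁' P₂' P₃' : ℝ × ℝ)
    (hP₁' : P₁' = steinerHat a b u (-u / 3))
    (hP₂' : P₂' = steinerHat a b u (-u / 3 - 2 * π / 3))
    (hP₃' : P₃' = steinerHat a b u (-u / 3 - 4 * π / 3)) :
    ((P₁'.1 + P₂'.1 + P₃'.1) / 3, (P₁'.2 + P₂'.2 + P₃'.2) / 3)
      = (-((a ^ 2 + b ^ 2) * cos u) / (2 * a), -((a ^ 2 + b ^ 2) * sin u) / (2 * b)) := by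
  subst hP₁' hP₂' hP₃'
  exact steinerHat_barycenter a b u (-u / 3)

/-- the barycenter of the cusp triangle `T'` coincides with the center of area
`C̄` of Steiner's Hat. -/
theorem stmt8 (a b u : ℝ) (hb : 0 < b) (hab : b < a)
    (P₁' P₂' P₃' : ℝ × ℝ)
    (hP₁' : P₁' = steinerHat a b u (-u / 3))
    (hP₂' : P₂' = steinerHat a b u (-u / 3 - 2 * π / 3))
    (hP₃' : P₃' = steinerHat a b u (-u / 3 - 4 * π / 3)) :
    ((P₁'.1 + P₂'.1 + P₃'.1) / 3, (P₁'.2 + P₂'.2 + P₃'.2) / 3)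
      = (-((a ^ 2 + b ^ 2) * cos u) / (2 * a), -((a ^ 2 + b ^ 2) * sin u) / (2 * b)) :=
  stmt8_general a b u P₁' P₂' P₃' hP₁' hP₂' hP₃'
end

section
/- The Steiner circumellipse of the cusp triangle T' is an axis-aligned ellipse centered at C̄ with semi-axes 3c²/(2a) (horizontal) and 3c²/(2b) (vertical); in particular it is similar to a 90°-rotated copy of E and its dimensions are independent of u. Precisely, each cusp P_i' = (x_i', y_i'), i = 1,2,3, satisfies (x_i' − C̄_x)²·(2a/(3c²))² + (y_i' − C̄_y)²·(2b/(3c²))² = 1, where C̄ = (C̄_x, C̄_y) is the barycenter of P₁', P₂', P₃'. -/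
open Real

/-!
The cusps sit at the parameters `t = -p` with `3p ≡ u (mod 2π)`, i.e. `p = (u + 2πk)/3`. For such
`p` the double- and triple-angle formulas collapse `Δ_u(-p)` to
`C̄ + (3c²/(2a) · cos p, 3c²/(2b) · sin p)`, a point of the ellipse centred at `C̄` with these
semi-axes. The three values of `p` are spaced by `2π/3`, so their cosines and sines sum to zero
and the barycentre of the cusps is `C̄`.
-/

lemma cos_two_pi_div_three : cos (2 * π / 3) = -(1 / 2) := by
  rw [show 2 * π / 3 = π - π / 3 by ring, cos_pi_sub, cos_pi_div_three]

lemma cos_add_cos_add_two_pi_div_three_add_cos_add_four_pi_div_three (p : ℝ) :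
    cos p + cos (p + 2 * π / 3) + cos (p + 4 * π / 3) = 0 := by
  have h : p + 4 * π / 3 = p - 2 * π / 3 + (1 : ℤ) * (2 * π) := by push_cast; ring
  rw [h, cos_add_int_mul_two_pi, cos_add, cos_sub, cos_two_pi_div_three]
  ring

lemma sin_add_sin_add_two_pi_div_three_add_sin_add_four_pi_div_three (p : ℝ) :
    sin p + sin (p + 2 * π / 3) + sin (p + 4 * π / 3) = 0 := by
  have h : p + 4 * π / 3 = p - 2 * π / 3 + (1 : ℤ) * (2 * π) := by push_cast; ring
  rw [h, sin_add_int_mul_two_pi, sin_add, sin_sub, cos_two_pi_div_three]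
  ring

lemma steinerHat_add_int_mul_two_pi (a b u t : ℝ) (k : ℤ) :
    steinerHat a b (u + k * (2 * π)) t = steinerHat a b u t := by
  simp only [steinerHat, ← add_assoc, cos_add_int_mul_two_pi, sin_add_int_mul_two_pi]

lemma steinerHat_three_mul_neg (a b p : ℝ) :
    steinerHat a b (3 * p) (-p) =
      (-((a ^ 2 + b ^ 2) * cos (3 * p)) / (2 * a) + 3 * (a ^ 2 - b ^ 2) / (2 * a) * cos p,
       -((a ^ 2 + b ^ 2) * sin (3 * p)) / (2 * b) + 3 * (a ^ 2 - b ^ 2) / (2 * b) * sin p) := by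
  rw [steinerHat, show -p + 3 * p = 2 * p by ring, cos_neg, sin_neg, cos_two_mul, sin_two_mul,
    cos_three_mul, sin_three_mul]
  ext
  · ring
  · linear_combination 2 * (a ^ 2 - b ^ 2) * sin p / b * sin_sq_add_cos_sq p

lemma steinerHat_neg_of_three_mul_eq (a b u p : ℝ) (k : ℤ) (h : 3 * p = u + k * (2 * π)) :
    steinerHat a b u (-p) =
      (-((a ^ 2 + b ^ 2) * cos u) / (2 * a) + 3 * (a ^ 2 - b ^ 2) / (2 * a) * cos p,
       -((a ^ 2 + b ^ 2) * sin u) / (2 * b) + 3 * (a ^ 2 - b ^ 2) / (2 * b) * sin p) := by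
  rw [← steinerHat_add_int_mul_two_pi a b u (-p) k, ← h, steinerHat_three_mul_neg, h,
    cos_add_int_mul_two_pi, sin_add_int_mul_two_pi]

lemma mul_cos_sq_mul_inv_sq_add_mul_sin_sq_mul_inv_sq {A B : ℝ} (hA : A ≠ 0) (hB : B ≠ 0)
    (p : ℝ) : (A * cos p) ^ 2 * A⁻¹ ^ 2 + (B * sin p) ^ 2 * B⁻¹ ^ 2 = 1 := by
  field_simp
  linear_combination cos_sq_add_sin_sq p

/-- the Steiner circumellipse of the cusp triangle `T'` is the axis-aligned
ellipse centered at the barycenter `C̄` of the cusps, with semi-axes `3c²/(2a)` and `3c²/(2b)`: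
each cusp satisfies its equation. -/
theorem stmt9 (a b u : ℝ) (hb : 0 < b) (hab : b < a)
    (P₁' P₂' P₃' C : ℝ × ℝ)
    (hP₁' : P₁' = steinerHat a b u (-u / 3))
    (hP₂' : P₂' = steinerHat a b u (-u / 3 - 2 * π / 3))
    (hP₃' : P₃' = steinerHat a b u (-u / 3 - 4 * π / 3))
    (hC : C = ((P₁'.1 + P₂'.1 + P₃'.1) / 3, (P₁'.2 + P₂'.2 + P₃'.2) / 3)) :
    C = (-((a ^ 2 + b ^ 2) * cos u) / (2 * a), -((a ^ 2 + b ^ 2) * sin u) / (2 * b)) ∧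
    (P₁'.1 - C.1) ^ 2 * (2 * a / (3 * (a ^ 2 - b ^ 2))) ^ 2
      + (P₁'.2 - C.2) ^ 2 * (2 * b / (3 * (a ^ 2 - b ^ 2))) ^ 2 = 1 ∧
    (P₂'.1 - C.1) ^ 2 * (2 * a / (3 * (a ^ 2 - b ^ 2))) ^ 2
      + (P₂'.2 - C.2) ^ 2 * (2 * b / (3 * (a ^ 2 - b ^ 2))) ^ 2 = 1 ∧
    (P₃'.1 - C.1) ^ 2 * (2 * a / (3 * (a ^ 2 - b ^ 2))) ^ 2
      + (P₃'.2 - C.2) ^ 2 * (2 * b / (3 * (a ^ 2 - b ^ 2))) ^ 2 = 1 := by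
  have hc : a ^ 2 - b ^ 2 ≠ 0 := by nlinarith
  have hA : 3 * (a ^ 2 - b ^ 2) / (2 * a) ≠ 0 := by have := hb.trans hab; positivity
  have hB : 3 * (a ^ 2 - b ^ 2) / (2 * b) ≠ 0 := by positivity
  rw [show -u / 3 = -(u / 3) by ring,
    steinerHat_neg_of_three_mul_eq a b u _ 0 (by push_cast; ring)] at hP₁'
  rw [show -u / 3 - 2 * π / 3 = -(u / 3 + 2 * π / 3) by ring,
    steinerHat_neg_of_three_mul_eq a b u _ 1 (by push_cast; ring)] at hP₂'
  rw [show -u / 3 - 4 * π / 3 = -(u / 3 + 4 * π / 3) by ring,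
    steinerHat_neg_of_three_mul_eq a b u _ 2 (by push_cast; ring)] at hP₃'
  have hC' : C = (-((a ^ 2 + b ^ 2) * cos u) / (2 * a), -((a ^ 2 + b ^ 2) * sin u) / (2 * b)) := by
    rw [hC, hP₁', hP₂', hP₃']
    ext
    · linear_combination (a ^ 2 - b ^ 2) / (2 * a) *
        cos_add_cos_add_two_pi_div_three_add_cos_add_four_pi_div_three (u / 3)
    · linear_combination (a ^ 2 - b ^ 2) / (2 * b) *
        sin_add_sin_add_two_pi_div_three_add_sin_add_four_pi_div_three (u / 3)
  subst hP₁' hP₂' hP₃'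
  refine ⟨hC', ?_, ?_, ?_⟩ <;>
  · rw [hC', ← inv_div (3 * (a ^ 2 - b ^ 2)), ← inv_div (3 * (a ^ 2 - b ^ 2))]
    simp only [add_sub_cancel_left]
    exact mul_cos_sq_mul_inv_sq_add_mul_sin_sq_mul_inv_sq hA hB _
end

section
/- The ratio of the area of the Steiner circumellipse E' of the cusp triangle (semi-axes 3c²/(2a) and 3c²/(2b)) to the area of E equals (9/4)·c⁴/(a²b²); and E' is congruent to E (i.e. 3c²/(2b) = a and 3c²/(2a) = b) if and only if a/b = (1 + √10)/3. -/
open Real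

/-- the area ratio of the Steiner circumellipse `E'` of the cusp triangle
(semi-axes `3c²/(2a)`, `3c²/(2b)`) to the ellipse `E` is `(9/4)c⁴/(a²b²)`, and `E'` is
congruent to `E` iff `a/b = (1 + √10)/3`. -/
theorem stmt10 (a b : ℝ) (hb : 0 < b) (hab : b < a) :
    (π * (3 * (a ^ 2 - b ^ 2) / (2 * a)) * (3 * (a ^ 2 - b ^ 2) / (2 * b))) / (π * a * b)
      = (9 / 4) * (a ^ 2 - b ^ 2) ^ 2 / (a ^ 2 * b ^ 2) ∧
    ((3 * (a ^ 2 - b ^ 2) / (2 * b) = a ∧ 3 * (a ^ 2 - b ^ 2) / (2 * a) = b)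
      ↔ a / b = (1 + Real.sqrt 10) / 3) := by
  have ha : 0 < a := hb.trans hab
  have hbne : b ≠ 0 := hb.ne'
  have hane : a ≠ 0 := ha.ne'
  constructor
  · have hpi : π ≠ 0 := Real.pi_ne_zero
    field_simp
    ring
  · constructor
    · rintro ⟨h1, h2⟩
      have key : 3 * (a ^ 2 - b ^ 2) = 2 * a * b := by
        field_simp at h1; linarith
      have hgt : 1 < a / b := (one_lt_div hb).2 hab
      have ht : (3 * (a / b) - 1) ^ 2 = 10 := by
        have hb2 : b ^ 2 ≠ 0 := pow_ne_zero 2 hbne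
        field_simp
        nlinarith [key]
      have h10 : Real.sqrt 10 = 3 * (a / b) - 1 := by
        rw [← ht, Real.sqrt_sq (by linarith)]
      rw [h10]; ring
    · intro h
      have hsq : Real.sqrt 10 ^ 2 = 10 := Real.sq_sqrt (by norm_num)
      have ha' : 3 * a = b * (1 + Real.sqrt 10) := by
        field_simp at h; linarith
      constructor <;> (rw [div_eq_iff (by positivity)]; nlinarith [hsq])
end

section
/- The pre-image triangles T = P₁P₂P₃ form a Poncelet family inscribed in E whose caustic is the concentric axis-aligned ellipse of half the size of E: the side through P₁ and P₂ is tangent to the ellipse x²/(a/2)² + y²/(b/2)² = 1 at the midpoint (P₁ + P₂)/2. Precisely, for all s ∈ ℝ, the point Q(s) = (1−s)P₁ + sP₂ satisfies 4·Q₁(s)²/a² + 4·Q₂(s)²/b² ≥ 1, with equality if and only if s = 1/2 (and similarly for the other two sides). -/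
open Real

/-!
Dividing the coordinates by `a` and `b` maps `E` to the unit circle and the half-size ellipse to
the circle of radius `1/2`. For two points of the unit circle at angular distance `θ`, the point
`(1 - s) e(t) + s e(t')` of their chord has squared norm `1 - 2 s (1 - s) (1 - cos θ)`. The cusp
pre-images are `2π/3` apart, so `cos θ = -1/2` and four times this squared norm is
`3 (2 s - 1)² + 1`, which is at least `1`, with equality only at the midpoint `s = 1/2`.
-/

lemma scaled_chord_normSq_eq {a b : ℝ} (ha : a ≠ 0) (hb : b ≠ 0) (t t' s : ℝ) :
    4 * ((1 - s) * (ellipsePt a b t).1 + s * (ellipsePt a b t').1) ^ 2 / a ^ 2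
      + 4 * ((1 - s) * (ellipsePt a b t).2 + s * (ellipsePt a b t').2) ^ 2 / b ^ 2
    = 4 * (1 - 2 * s * (1 - s) * (1 - cos (t - t'))) := by
  have unscale {c : ℝ} (hc : c ≠ 0) (x y : ℝ) :
      4 * ((1 - s) * (c * x) + s * (c * y)) ^ 2 / c ^ 2 = 4 * ((1 - s) * x + s * y) ^ 2 := by
    field_simp
  simp only [ellipsePt, unscale ha, unscale hb, cos_sub]
  linear_combination (4 * (1 - s) ^ 2) * sin_sq_add_cos_sq t + (4 * s ^ 2) * sin_sq_add_cos_sq t'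

lemma one_le_three_mul_sq_add_one (s : ℝ) :
    1 ≤ 3 * (2 * s - 1) ^ 2 + 1 ∧ (3 * (2 * s - 1) ^ 2 + 1 = 1 ↔ s = 1 / 2) := by
  refine ⟨by nlinarith [sq_nonneg (2 * s - 1)], ⟨fun h => ?_, fun h => by subst h; norm_num⟩⟩
  have hsq : (2 * s - 1) ^ 2 = 0 := by linarith
  linarith [pow_eq_zero_iff (n := 2) two_ne_zero |>.mp hsq]

lemma chord_tangent_half_ellipse {a b t t' : ℝ} (ha : a ≠ 0) (hb : b ≠ 0)
    (hcos : cos (t - t') = -(1 / 2)) (s : ℝ) :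
    4 * ((1 - s) * (ellipsePt a b t).1 + s * (ellipsePt a b t').1) ^ 2 / a ^ 2
        + 4 * ((1 - s) * (ellipsePt a b t).2 + s * (ellipsePt a b t').2) ^ 2 / b ^ 2 ≥ 1 ∧
      (4 * ((1 - s) * (ellipsePt a b t).1 + s * (ellipsePt a b t').1) ^ 2 / a ^ 2
        + 4 * ((1 - s) * (ellipsePt a b t).2 + s * (ellipsePt a b t').2) ^ 2 / b ^ 2 = 1
        ↔ s = 1 / 2) := by
  rw [scaled_chord_normSq_eq ha hb, hcos,
    show 4 * (1 - 2 * s * (1 - s) * (1 - -(1 / 2))) = 3 * (2 * s - 1) ^ 2 + 1 by ring]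
  exact one_le_three_mul_sq_add_one s

lemma cos_neg_four_pi_div_three : cos (-(4 * π / 3)) = -(1 / 2) := by
  rw [cos_neg, show 4 * π / 3 = π / 3 + π by ring, cos_add_pi, cos_pi_div_three]

/-- the sides of the pre-image triangle `T = P₁P₂P₃` are tangent to the
half-size concentric ellipse `x²/(a/2)² + y²/(b/2)² = 1` at the side midpoints: each point
of the side lies outside that ellipse, with equality exactly at the midpoint. -/
theorem stmt11 (a b u : ℝ) (hb : 0 < b) (hab : b < a)
    (P₁ P₂ P₃ : ℝ × ℝ)
    (hP₁ : P₁ = ellipsePt a b (-u / 3))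
    (hP₂ : P₂ = ellipsePt a b (-u / 3 - 2 * π / 3))
    (hP₃ : P₃ = ellipsePt a b (-u / 3 - 4 * π / 3)) :
    (∀ s : ℝ,
      4 * ((1 - s) * P₁.1 + s * P₂.1) ^ 2 / a ^ 2
        + 4 * ((1 - s) * P₁.2 + s * P₂.2) ^ 2 / b ^ 2 ≥ 1 ∧
      (4 * ((1 - s) * P₁.1 + s * P₂.1) ^ 2 / a ^ 2
        + 4 * ((1 - s) * P₁.2 + s * P₂.2) ^ 2 / b ^ 2 = 1 ↔ s = 1 / 2)) ∧
    (∀ s : ℝ,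
      4 * ((1 - s) * P₂.1 + s * P₃.1) ^ 2 / a ^ 2
        + 4 * ((1 - s) * P₂.2 + s * P₃.2) ^ 2 / b ^ 2 ≥ 1 ∧
      (4 * ((1 - s) * P₂.1 + s * P₃.1) ^ 2 / a ^ 2
        + 4 * ((1 - s) * P₂.2 + s * P₃.2) ^ 2 / b ^ 2 = 1 ↔ s = 1 / 2)) ∧
    (∀ s : ℝ,
      4 * ((1 - s) * P₃.1 + s * P₁.1) ^ 2 / a ^ 2
        + 4 * ((1 - s) * P₃.2 + s * P₁.2) ^ 2 / b ^ 2 ≥ 1 ∧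
      (4 * ((1 - s) * P₃.1 + s * P₁.1) ^ 2 / a ^ 2
        + 4 * ((1 - s) * P₃.2 + s * P₁.2) ^ 2 / b ^ 2 = 1 ↔ s = 1 / 2)) := by
  have ha : a ≠ 0 := (hb.trans hab).ne'
  subst hP₁ hP₂ hP₃
  refine ⟨chord_tangent_half_ellipse ha hb.ne' ?_, chord_tangent_half_ellipse ha hb.ne' ?_,
    chord_tangent_half_ellipse ha hb.ne' ?_⟩
  · rw [show -u / 3 - (-u / 3 - 2 * π / 3) = 2 * π / 3 by ring, cos_two_pi_div_three]
  · rw [show -u / 3 - 2 * π / 3 - (-u / 3 - 4 * π / 3) = 2 * π / 3 by ring, cos_two_pi_div_three]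
  · rw [show -u / 3 - 4 * π / 3 - -u / 3 = -(4 * π / 3) by ring, cos_neg_four_pi_div_three]
end

section
/- The pre-image triangle T = P₁P₂P₃ has barycenter stationary at the origin, (P₁ + P₂ + P₃)/3 = (0,0), and its area is invariant over M and equals 3√3·ab/4: with P_i = (x_i, y_i), one has (1/2)·|x₁(y₂ − y₃) + x₂(y₃ − y₁) + x₃(y₁ − y₂)| = 3√3·ab/4 for every u. -/
open Real

/-- the pre-image triangle `T = P₁P₂P₃` has barycenter at the origin and
invariant area `3√3 ab/4`. -/
theorem stmt12 (a b u : ℝ) (hb : 0 < b) (hab : b < a)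
    (P₁ P₂ P₃ : ℝ × ℝ)
    (hP₁ : P₁ = ellipsePt a b (-u / 3))
    (hP₂ : P₂ = ellipsePt a b (-u / 3 - 2 * π / 3))
    (hP₃ : P₃ = ellipsePt a b (-u / 3 - 4 * π / 3)) :
    ((P₁.1 + P₂.1 + P₃.1) / 3, (P₁.2 + P₂.2 + P₃.2) / 3) = ((0 : ℝ), (0 : ℝ)) ∧
    (1 / 2) * |P₁.1 * (P₂.2 - P₃.2) + P₂.1 * (P₃.2 - P₁.2) + P₃.1 * (P₁.2 - P₂.2)|
      = 3 * Real.sqrt 3 * a * b / 4 := by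
  subst hP₁ hP₂ hP₃
  have hc1 : Real.cos (2 * π / 3) = -(1/2) := by
    rw [show (2 * π / 3) = π - π/3 by ring, Real.cos_pi_sub, Real.cos_pi_div_three]
  have hs1 : Real.sin (2 * π / 3) = Real.sqrt 3 / 2 := by
    rw [show (2 * π / 3) = π - π/3 by ring, Real.sin_pi_sub, Real.sin_pi_div_three]
  have hc2 : Real.cos (4 * π / 3) = -(1/2) := by
    rw [show (4 * π / 3) = π + π/3 by ring, Real.cos_add, Real.cos_pi, Real.sin_pi,
      Real.cos_pi_div_three]
    ring
  have hs2 : Real.sin (4 * π / 3) = -(Real.sqrt 3 / 2) := by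
    rw [show (4 * π / 3) = π + π/3 by ring, Real.sin_add, Real.cos_pi, Real.sin_pi,
      Real.sin_pi_div_three]
    ring
  simp only [ellipsePt, show ∀ x : ℝ, -u/3 - x = -u/3 - x from fun _ => rfl,
    Real.cos_sub, Real.sin_sub, hc1, hs1, hc2, hs2]
  constructor
  · norm_num
    constructor <;> ring
  · have hpy := Real.sin_sq_add_cos_sq (-u / 3)
    have hE : a * Real.cos (-u/3) * (b * (Real.sin (-u/3) * -(1/2) - Real.cos (-u/3) * (Real.sqrt 3 / 2)) -
          b * (Real.sin (-u/3) * -(1/2) - Real.cos (-u/3) * -(Real.sqrt 3 / 2))) +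
        a * (Real.cos (-u/3) * -(1/2) + Real.sin (-u/3) * (Real.sqrt 3 / 2)) *
          (b * (Real.sin (-u/3) * -(1/2) - Real.cos (-u/3) * -(Real.sqrt 3 / 2)) - b * Real.sin (-u/3)) +
        a * (Real.cos (-u/3) * -(1/2) + Real.sin (-u/3) * -(Real.sqrt 3 / 2)) *
          (b * Real.sin (-u/3) - b * (Real.sin (-u/3) * -(1/2) - Real.cos (-u/3) * (Real.sqrt 3 / 2)))
        = -(3 * Real.sqrt 3 / 2 * (a * b)) := by
      linear_combination (-(3 * Real.sqrt 3 / 2) * a * b) * hpy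
    have ha : 0 < a := hb.trans hab
    rw [hE, abs_neg, abs_of_nonneg (by positivity)]
    ring
end

section
/- When a cusp of Steiner's Hat crosses the ellipse, it coincides with its pre-image: if the cusp P₁' = Δ_u(t₁) satisfies the ellipse equation (i.e. (x-coordinate)²/a² + (y-coordinate)²/b² = 1), then P₁' = P₁ = P(t₁); moreover in that case P₁' is one of the four points (±a²/√(a²+b²), ±b²/√(a²+b²)). -/
set_option maxHeartbeats 1000000


open Real

/-- if the cusp `P₁' = Δ_u(t₁)` lies on the ellipse, then it coincides with
its pre-image `P₁ = P(t₁)`, and it is one of the four points `(±a²/√(a²+b²), ±b²/√(a²+b²))`. -/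
theorem stmt13 (a b u : ℝ) (hb : 0 < b) (hab : b < a)
    (P₁ P₁' : ℝ × ℝ)
    (hP₁ : P₁ = ellipsePt a b (-u / 3))
    (hP₁' : P₁' = steinerHat a b u (-u / 3))
    (hon : P₁'.1 ^ 2 / a ^ 2 + P₁'.2 ^ 2 / b ^ 2 = 1) :
    P₁' = P₁ ∧
    (P₁' = (a ^ 2 / Real.sqrt (a ^ 2 + b ^ 2), b ^ 2 / Real.sqrt (a ^ 2 + b ^ 2)) ∨
     P₁' = (a ^ 2 / Real.sqrt (a ^ 2 + b ^ 2), -(b ^ 2 / Real.sqrt (a ^ 2 + b ^ 2))) ∨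
     P₁' = (-(a ^ 2 / Real.sqrt (a ^ 2 + b ^ 2)), b ^ 2 / Real.sqrt (a ^ 2 + b ^ 2)) ∨
     P₁' = (-(a ^ 2 / Real.sqrt (a ^ 2 + b ^ 2)), -(b ^ 2 / Real.sqrt (a ^ 2 + b ^ 2)))) := by
  have ha : (0:ℝ) < a := hb.trans hab
  have ha0 : a ≠ 0 := ne_of_gt ha
  have hb0 : b ≠ 0 := ne_of_gt hb
  set v : ℝ := u / 3 with hv
  set k : ℝ := cos v with hk
  set s : ℝ := sin v with hs
  have hpyth : s ^ 2 + k ^ 2 = 1 := sin_sq_add_cos_sq v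
  -- express the coordinates of P₁'
  have hcu : cos u = 4 * k ^ 3 - 3 * k := by
    have : u = 3 * v := by rw [hv]; ring
    rw [this, cos_three_mul]
  have hsu : sin u = 3 * s - 4 * s ^ 3 := by
    have : u = 3 * v := by rw [hv]; ring
    rw [this, sin_three_mul]
  have harg : -u / 3 + u = 2 * v := by rw [hv]; ring
  have hargt : (-u / 3 : ℝ) = -v := by rw [hv]; ring
  have hx : P₁'.1 = (3 * a ^ 2 * k - 2 * (a ^ 2 + b ^ 2) * k ^ 3) / a := by
    rw [hP₁']
    show ((a ^ 2 - b ^ 2) * (1 + cos (-u/3 + u)) * cos (-u/3) - a ^ 2 * cos u) / a = _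
    rw [harg, hargt, cos_two_mul, cos_neg, hcu, ← hk]
    ring
  have hy : P₁'.2 = (2 * (a ^ 2 + b ^ 2) * s ^ 3 - 3 * b ^ 2 * s) / b := by
    rw [hP₁']
    show ((a ^ 2 - b ^ 2) * cos (-u/3) * sin (-u/3 + u) - (a ^ 2 - b ^ 2) * sin (-u/3)
        - a ^ 2 * sin u) / b = _
    rw [harg, hargt, sin_two_mul, cos_neg, sin_neg, hsu, ← hk, ← hs]
    congr 1
    linear_combination 2 * (a ^ 2 - b ^ 2) * s * hpyth
  -- the polynomial form of the on-ellipse condition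
  have e : b ^ 4 * (3 * a ^ 2 * k - 2 * (a ^ 2 + b ^ 2) * k ^ 3) ^ 2
      + a ^ 4 * (2 * (a ^ 2 + b ^ 2) * s ^ 3 - 3 * b ^ 2 * s) ^ 2 = a ^ 4 * b ^ 4 := by
    rw [hx, hy] at hon
    field_simp at hon
    linarith [hon]
  have hd : (0:ℝ) < a ^ 2 + b ^ 2 := by positivity
  have key : (a ^ 2 + b ^ 2) * k ^ 2 = a ^ 2 := by
    have h3 : 4 * (a ^ 2 - b ^ 2) * ((a ^ 2 + b ^ 2) * k ^ 2 - a ^ 2) ^ 3 = 0 := by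
      linear_combination (-1 : ℝ) * e +
        (a^4*b^4 - 4*a^6*b^2 + 4*a^8 + s^2*(-8*a^4*b^4 - 4*a^6*b^2 + 4*a^8)
          + s^4*(4*a^4*b^4 + 8*a^6*b^2 + 4*a^8) + k^2*(4*a^4*b^4 - 4*a^6*b^2 - 8*a^8)
          + k^2*s^2*(-4*a^4*b^4 - 8*a^6*b^2 - 4*a^8)
          + k^4*(4*a^4*b^4 + 8*a^6*b^2 + 4*a^8)) * hpyth
    have hab2 : (0:ℝ) < a ^ 2 - b ^ 2 := by nlinarith
    have : ((a ^ 2 + b ^ 2) * k ^ 2 - a ^ 2) ^ 3 = 0 := by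
      rcases mul_eq_zero.mp h3 with h | h
      · nlinarith
      · exact h
    have := pow_eq_zero_iff (n := 3) (by norm_num) |>.mp this
    linarith
  have keys : (a ^ 2 + b ^ 2) * s ^ 2 = b ^ 2 := by nlinarith [hpyth]
  -- simplified coordinates
  have hx' : P₁'.1 = a * k := by
    rw [hx]; field_simp; linear_combination -2 * k * key
  have hy' : P₁'.2 = -(b * s) := by
    rw [hy]; field_simp; linear_combination 2 * s * keys
  constructor
  · rw [hP₁]
    show P₁' = (a * cos (-u/3), b * sin (-u/3))
    rw [hargt, cos_neg, sin_neg, ← hk, ← hs]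
    exact Prod.ext (by rw [hx']) (by rw [hy']; ring)
  · -- square roots
    have hsq : Real.sqrt (a ^ 2 + b ^ 2) ^ 2 = a ^ 2 + b ^ 2 := Real.sq_sqrt hd.le
    have hsqpos : (0:ℝ) < Real.sqrt (a ^ 2 + b ^ 2) := Real.sqrt_pos.mpr hd
    have hk2 : k ^ 2 = a ^ 2 / (a ^ 2 + b ^ 2) := by
      field_simp; linarith [key]
    have hs2 : s ^ 2 = b ^ 2 / (a ^ 2 + b ^ 2) := by
      field_simp; linarith [keys]
    have hx2 : P₁'.1 ^ 2 = (a ^ 2 / Real.sqrt (a ^ 2 + b ^ 2)) ^ 2 := by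
      rw [hx', div_pow, hsq, mul_pow, hk2]; ring
    have hy2 : P₁'.2 ^ 2 = (b ^ 2 / Real.sqrt (a ^ 2 + b ^ 2)) ^ 2 := by
      rw [hy', div_pow, hsq, neg_pow, mul_pow, hs2]; ring
    have hxc : P₁'.1 = a ^ 2 / Real.sqrt (a ^ 2 + b ^ 2)
        ∨ P₁'.1 = -(a ^ 2 / Real.sqrt (a ^ 2 + b ^ 2)) := sq_eq_sq_iff_eq_or_eq_neg.mp hx2
    have hyc : P₁'.2 = b ^ 2 / Real.sqrt (a ^ 2 + b ^ 2)
        ∨ P₁'.2 = -(b ^ 2 / Real.sqrt (a ^ 2 + b ^ 2)) := sq_eq_sq_iff_eq_or_eq_neg.mp hy2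
    rcases hxc with h1 | h1 <;> rcases hyc with h2 | h2
    · exact Or.inl (Prod.ext h1 h2)
    · exact Or.inr (Or.inl (Prod.ext h1 h2))
    · exact Or.inr (Or.inr (Or.inl (Prod.ext h1 h2)))
    · exact Or.inr (Or.inr (Or.inr (Prod.ext h1 h2)))
end

section
/- The cusp triangle T' and the triangle T'' of the centers of the osculating circles are homothetic with center M and ratio 2: for each i = 1,2,3, P_i'' = (M + P_i')/2, i.e. P_i' − M = 2(P_i'' − M). Consequently, with P_i'' = (x_i'', y_i''), the area of T'' equals one quarter of the area of T': (1/2)·|x₁''(y₂'' − y₃'') + x₂''(y₃'' − y₁'') + x₃''(y₁'' − y₂'')| = 27√3·c⁴/(64ab) for every u. -/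
/-!
At a cusp, `3t + u ≡ 0 (mod 2π)`, so `cos (t + u)`, `sin (t + u)` and `sin u` equal `cos 2t`,
`-sin 2t` and `-sin 3t`, and `P'' = (M + P')/2` reduces to the double and triple angle formulas.

For the area, `cos³ s = (3 cos s + cos 3s)/4` and `sin³ s = (3 sin s - sin 3s)/4`, and `3s` is
the same angle modulo `2π` at the three cusps. Hence `T''` is the image of the equilateral
triangle inscribed in the unit circle at the angles `t, t - 2π/3, t - 4π/3` under the affine map
`(x, y) ↦ (3c²x/(4a) + p, -3c²y/(4b) + q)`, and its area is `(9c⁴/(16ab)) · 3√3/4`.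
-/

open Real

/-- Center of the circle osculating the ellipse at `P(t)` (a point of the evolute). -/
noncomputable def oscCenter (a b t : ℝ) : ℝ × ℝ :=
  ((a ^ 2 - b ^ 2) * (cos t) ^ 3 / a, -((a ^ 2 - b ^ 2) * (sin t) ^ 3 / b))

theorem oscCenter_eq_midpoint_of_cusp (a b t u : ℝ) (k : ℤ) (ha : a ≠ 0) (hb : b ≠ 0)
    (hu : u + 3 * t = k * (2 * π)) :
    oscCenter a b t =
      (((ellipsePt a b u).1 + (steinerHat a b u t).1) / 2,
        ((ellipsePt a b u).2 + (steinerHat a b u t).2) / 2) := by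
  have hcos : cos (t + u) = cos (2 * t) := by
    rw [show t + u = -(2 * t) + k * (2 * π) by linarith, cos_add_int_mul_two_pi, cos_neg]
  have hsin : sin (t + u) = -sin (2 * t) := by
    rw [show t + u = -(2 * t) + k * (2 * π) by linarith, sin_add_int_mul_two_pi, sin_neg]
  have hsin_u : sin u = -sin (3 * t) := by
    rw [show u = -(3 * t) + k * (2 * π) by linarith, sin_add_int_mul_two_pi, sin_neg]
  simp only [oscCenter, ellipsePt, steinerHat, hcos, hsin, hsin_u, cos_two_mul,
    sin_two_mul, sin_three_mul, Prod.mk.injEq]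
  constructor
  · field_simp
    ring
  · field_simp
    linear_combination 2 * (a ^ 2 - b ^ 2) * sin t * sin_sq_add_cos_sq t

def twiceSignedArea (P Q R : ℝ × ℝ) : ℝ :=
  P.1 * (Q.2 - R.2) + Q.1 * (R.2 - P.2) + R.1 * (P.2 - Q.2)

theorem twiceSignedArea_affine (α β p q x₁ y₁ x₂ y₂ x₃ y₃ : ℝ) :
    twiceSignedArea (α * x₁ + p, β * y₁ + q) (α * x₂ + p, β * y₂ + q)
        (α * x₃ + p, β * y₃ + q) =
      α * β * twiceSignedArea (x₁, y₁) (x₂, y₂) (x₃, y₃) := by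
  simp only [twiceSignedArea]
  ring

theorem twiceSignedArea_unitCircle (θ₁ θ₂ θ₃ : ℝ) :
    twiceSignedArea (cos θ₁, sin θ₁) (cos θ₂, sin θ₂) (cos θ₃, sin θ₃)
      = sin (θ₂ - θ₁) + sin (θ₃ - θ₂) + sin (θ₁ - θ₃) := by
  simp only [twiceSignedArea, sin_sub]
  ring

theorem twiceSignedArea_equilateral (t : ℝ) :
    twiceSignedArea (cos t, sin t) (cos (t - 2 * π / 3), sin (t - 2 * π / 3))
      (cos (t - 4 * π / 3), sin (t - 4 * π / 3)) = -(3 * √3 / 2) := by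
  have h₁ : sin (t - 2 * π / 3 - t) = -(√3 / 2) := by
    rw [show t - 2 * π / 3 - t = -(π - π / 3) by ring, sin_neg, sin_pi_sub, sin_pi_div_three]
  have h₂ : sin (t - 4 * π / 3 - (t - 2 * π / 3)) = -(√3 / 2) := by
    rw [show t - 4 * π / 3 - (t - 2 * π / 3) = -(π - π / 3) by ring, sin_neg, sin_pi_sub,
      sin_pi_div_three]
  have h₃ : sin (t - (t - 4 * π / 3)) = -(√3 / 2) := by
    rw [show t - (t - 4 * π / 3) = π / 3 + π by ring, sin_add_pi, sin_pi_div_three]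
  rw [twiceSignedArea_unitCircle, h₁, h₂, h₃]
  ring

theorem oscCenter_eq_affine_cos_sin (a b s : ℝ) :
    oscCenter a b s =
      (3 * (a ^ 2 - b ^ 2) / (4 * a) * cos s + (a ^ 2 - b ^ 2) * cos (3 * s) / (4 * a),
        -(3 * (a ^ 2 - b ^ 2) / (4 * b)) * sin s + (a ^ 2 - b ^ 2) * sin (3 * s) / (4 * b)) := by
  simp only [oscCenter, cos_three_mul, sin_three_mul, Prod.mk.injEq]
  constructor <;> ring

theorem oscCenter_eq_affine_of_three_mul_eq (a b s t : ℝ) (n : ℕ)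
    (hs : 3 * s = 3 * t - n * (2 * π)) :
    oscCenter a b s =
      (3 * (a ^ 2 - b ^ 2) / (4 * a) * cos s + (a ^ 2 - b ^ 2) * cos (3 * t) / (4 * a),
        -(3 * (a ^ 2 - b ^ 2) / (4 * b)) * sin s + (a ^ 2 - b ^ 2) * sin (3 * t) / (4 * b)) := by
  rw [oscCenter_eq_affine_cos_sin, hs, cos_sub_nat_mul_two_pi, sin_sub_nat_mul_two_pi]

theorem twiceSignedArea_oscCenter (a b t : ℝ) :
    twiceSignedArea (oscCenter a b t) (oscCenter a b (t - 2 * π / 3))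
        (oscCenter a b (t - 4 * π / 3)) = 27 * √3 * (a ^ 2 - b ^ 2) ^ 2 / (32 * a * b) := by
  rw [oscCenter_eq_affine_of_three_mul_eq a b t t 0 (by simp),
    oscCenter_eq_affine_of_three_mul_eq a b _ t 1 (by push_cast; ring),
    oscCenter_eq_affine_of_three_mul_eq a b _ t 2 (by push_cast; ring),
    twiceSignedArea_affine, twiceSignedArea_equilateral]
  ring

/-- `T'` and `T''` are homothetic with center `M` and ratio 2:
`P_i'' = (M + P_i')/2`; consequently the area of `T''` is `27√3 c⁴/(64ab)`,
one quarter that of `T'`. -/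
theorem stmt14 (a b u : ℝ) (hb : 0 < b) (hab : b < a)
    (M P₁' P₂' P₃' P₁'' P₂'' P₃'' : ℝ × ℝ)
    (hM : M = ellipsePt a b u)
    (hP₁' : P₁' = steinerHat a b u (-u / 3))
    (hP₂' : P₂' = steinerHat a b u (-u / 3 - 2 * π / 3))
    (hP₃' : P₃' = steinerHat a b u (-u / 3 - 4 * π / 3))
    (hP₁'' : P₁'' = oscCenter a b (-u / 3))
    (hP₂'' : P₂'' = oscCenter a b (-u / 3 - 2 * π / 3))
    (hP₃'' : P₃'' = oscCenter a b (-u / 3 - 4 * π / 3)) :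
    P₁'' = ((M.1 + P₁'.1) / 2, (M.2 + P₁'.2) / 2) ∧
    P₂'' = ((M.1 + P₂'.1) / 2, (M.2 + P₂'.2) / 2) ∧
    P₃'' = ((M.1 + P₃'.1) / 2, (M.2 + P₃'.2) / 2) ∧
    (1 / 2) * |P₁''.1 * (P₂''.2 - P₃''.2) + P₂''.1 * (P₃''.2 - P₁''.2)
        + P₃''.1 * (P₁''.2 - P₂''.2)|
      = 27 * Real.sqrt 3 * (a ^ 2 - b ^ 2) ^ 2 / (64 * a * b) := by
  subst hM hP₁' hP₂' hP₃' hP₁'' hP₂'' hP₃''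
  have ha : 0 < a := hb.trans hab
  refine ⟨oscCenter_eq_midpoint_of_cusp a b _ u 0 ha.ne' hb.ne' (by push_cast; ring),
    oscCenter_eq_midpoint_of_cusp a b _ u (-1) ha.ne' hb.ne' (by push_cast; ring),
    oscCenter_eq_midpoint_of_cusp a b _ u (-2) ha.ne' hb.ne' (by push_cast; ring), ?_⟩
  change 1 / 2 * |twiceSignedArea _ _ _| = _
  rw [twiceSignedArea_oscCenter, abs_of_nonneg (by positivity)]
  ring
end

section
/- The barycenter of the triangle T'' of osculating-circle centers coincides with the circumcenter of the pre-image triangle T: (P₁'' + P₂'' + P₃'')/3 = (c² cos u/(4a), −c² sin u/(4b)), and this point is equidistant from P₁, P₂ and P₃. -/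
open Real

/-! The three parameters `t`, `t - 2π/3`, `t - 4π/3` all triple to `3t` modulo `2π`, so by the
triplication formulas `cos³ s = (3 cos s + cos 3s)/4`, `sin³ s = (3 sin s - sin 3s)/4` the
barycenter of the three centers of curvature only sees `3t = -u` and the vanishing sums
`∑ cos tᵢ = ∑ sin tᵢ = 0`. For the circumcenter, the squared distance from
`(c² cos 3s/(4a), c² sin 3s/(4b))` to `P(s)` is
`c⁴ cos² 3s/(16a²) + c⁴ sin² 3s/(16b²) + (a² + b²)/2`: the `cos 2s` terms coming from the
cross terms and from `a² cos² s + b² sin² s` cancel. It therefore depends on `s` only through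
`3s`, which is the same for the three cusp pre-images. -/

theorem cos_thirds_sum_eq_zero (t : ℝ) :
    cos t + cos (t - 2 * π / 3) + cos (t - 4 * π / 3) = 0 := by
  have h := cos_add_cos (t - 2 * π / 3) (t - 4 * π / 3)
  rw [show (t - 2 * π / 3 + (t - 4 * π / 3)) / 2 = t - π by ring,
    show (t - 2 * π / 3 - (t - 4 * π / 3)) / 2 = π / 3 by ring, cos_sub_pi, cos_pi_div_three] at h
  linarith

theorem sin_thirds_sum_eq_zero (t : ℝ) :
    sin t + sin (t - 2 * π / 3) + sin (t - 4 * π / 3) = 0 := by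
  have h := sin_add_sin (t - 2 * π / 3) (t - 4 * π / 3)
  rw [show (t - 2 * π / 3 + (t - 4 * π / 3)) / 2 = t - π by ring,
    show (t - 2 * π / 3 - (t - 4 * π / 3)) / 2 = π / 3 by ring, sin_sub_pi, cos_pi_div_three] at h
  linarith

theorem cos_pow_three_of_three_mul_eq {s x : ℝ} (n : ℕ) (h : 3 * s = x - n * (2 * π)) :
    cos s ^ 3 = (3 * cos s + cos x) / 4 := by
  have h3 := cos_three_mul s
  rw [h, cos_sub_nat_mul_two_pi] at h3
  linarith

theorem sin_pow_three_of_three_mul_eq {s x : ℝ} (n : ℕ) (h : 3 * s = x - n * (2 * π)) :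
    sin s ^ 3 = (3 * sin s - sin x) / 4 := by
  have h3 := sin_three_mul s
  rw [h, sin_sub_nat_mul_two_pi] at h3
  linarith

theorem cos_thirds_pow_three_sum (t : ℝ) :
    cos t ^ 3 + cos (t - 2 * π / 3) ^ 3 + cos (t - 4 * π / 3) ^ 3 = 3 / 4 * cos (3 * t) := by
  rw [cos_pow_three_of_three_mul_eq (s := t) (x := 3 * t) 0 (by push_cast; ring),
    cos_pow_three_of_three_mul_eq (s := t - 2 * π / 3) (x := 3 * t) 1 (by push_cast; ring),
    cos_pow_three_of_three_mul_eq (s := t - 4 * π / 3) (x := 3 * t) 2 (by push_cast; ring)]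
  linear_combination 3 / 4 * cos_thirds_sum_eq_zero t

theorem sin_thirds_pow_three_sum (t : ℝ) :
    sin t ^ 3 + sin (t - 2 * π / 3) ^ 3 + sin (t - 4 * π / 3) ^ 3 = -(3 / 4 * sin (3 * t)) := by
  rw [sin_pow_three_of_three_mul_eq (s := t) (x := 3 * t) 0 (by push_cast; ring),
    sin_pow_three_of_three_mul_eq (s := t - 2 * π / 3) (x := 3 * t) 1 (by push_cast; ring),
    sin_pow_three_of_three_mul_eq (s := t - 4 * π / 3) (x := 3 * t) 2 (by push_cast; ring)]
  linear_combination 3 / 4 * sin_thirds_sum_eq_zero t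

noncomputable def preimageCircumcenter (a b u : ℝ) : ℝ × ℝ :=
  ((a ^ 2 - b ^ 2) * cos u / (4 * a), -((a ^ 2 - b ^ 2) * sin u / (4 * b)))

theorem oscCenter_barycenter (a b u : ℝ) :
    (((oscCenter a b (-u / 3)).1 + (oscCenter a b (-u / 3 - 2 * π / 3)).1
        + (oscCenter a b (-u / 3 - 4 * π / 3)).1) / 3,
      ((oscCenter a b (-u / 3)).2 + (oscCenter a b (-u / 3 - 2 * π / 3)).2
        + (oscCenter a b (-u / 3 - 4 * π / 3)).2) / 3) = preimageCircumcenter a b u := by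
  have hcos := cos_thirds_pow_three_sum (-u / 3)
  have hsin := sin_thirds_pow_three_sum (-u / 3)
  rw [show 3 * (-u / 3) = -u by ring, cos_neg] at hcos
  rw [show 3 * (-u / 3) = -u by ring, sin_neg] at hsin
  simp only [oscCenter, preimageCircumcenter, Prod.mk.injEq]
  constructor
  · linear_combination (a ^ 2 - b ^ 2) / (3 * a) * hcos
  · linear_combination -(a ^ 2 - b ^ 2) / (3 * b) * hsin

theorem sqDist_preimageCircumcenter_ellipsePt {a b u s : ℝ} (ha : a ≠ 0) (hb : b ≠ 0) (n : ℕ)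
    (h : 3 * s = -u - n * (2 * π)) :
    sqDist (preimageCircumcenter a b u) (ellipsePt a b s) =
      (a ^ 2 - b ^ 2) ^ 2 * (cos u ^ 2 / (16 * a ^ 2) + sin u ^ 2 / (16 * b ^ 2))
        + (a ^ 2 + b ^ 2) / 2 := by
  have hcos := cos_pow_three_of_three_mul_eq n h
  have hsin := sin_pow_three_of_three_mul_eq n h
  rw [cos_neg] at hcos
  rw [sin_neg] at hsin
  have hu_cos : cos u = 4 * cos s ^ 3 - 3 * cos s := by linarith
  have hu_sin : sin u = 4 * sin s ^ 3 - 3 * sin s := by linarith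
  simp only [sqDist, preimageCircumcenter, ellipsePt]
  rw [hu_cos, hu_sin]
  have hfactor : ∀ C S : ℝ,
      ((a ^ 2 - b ^ 2) * (4 * C ^ 3 - 3 * C) / (4 * a) - a * C) ^ 2
        + (-((a ^ 2 - b ^ 2) * (4 * S ^ 3 - 3 * S) / (4 * b)) - b * S) ^ 2
        - ((a ^ 2 - b ^ 2) ^ 2 * ((4 * C ^ 3 - 3 * C) ^ 2 / (16 * a ^ 2)
          + (4 * S ^ 3 - 3 * S) ^ 2 / (16 * b ^ 2)) + (a ^ 2 + b ^ 2) / 2)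
      = (S ^ 2 + C ^ 2 - 1) * ((a ^ 2 + b ^ 2) / 2 - 2 * (a ^ 2 - b ^ 2) * (C ^ 2 - S ^ 2)) := by
    intro C S
    field_simp
    ring
  have := hfactor (cos s) (sin s)
  rw [sin_sq_add_cos_sq, sub_self, zero_mul] at this
  linarith

/-- the barycenter of `T''` equals `(c² cos u/(4a), −c² sin u/(4b))`, which is
the circumcenter of the pre-image triangle `T` (equidistant from `P₁, P₂, P₃`). -/
theorem stmt15 (a b u : ℝ) (hb : 0 < b) (hab : b < a)
    (P₁ P₂ P₃ P₁'' P₂'' P₃'' X : ℝ × ℝ)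
    (hP₁ : P₁ = ellipsePt a b (-u / 3))
    (hP₂ : P₂ = ellipsePt a b (-u / 3 - 2 * π / 3))
    (hP₃ : P₃ = ellipsePt a b (-u / 3 - 4 * π / 3))
    (hP₁'' : P₁'' = oscCenter a b (-u / 3))
    (hP₂'' : P₂'' = oscCenter a b (-u / 3 - 2 * π / 3))
    (hP₃'' : P₃'' = oscCenter a b (-u / 3 - 4 * π / 3))
    (hX : X = ((a ^ 2 - b ^ 2) * cos u / (4 * a), -((a ^ 2 - b ^ 2) * sin u / (4 * b)))) :
    ((P₁''.1 + P₂''.1 + P₃''.1) / 3, (P₁''.2 + P₂''.2 + P₃''.2) / 3) = X ∧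
    sqDist X P₁ = sqDist X P₂ ∧ sqDist X P₂ = sqDist X P₃ := by
  have ha : a ≠ 0 := (hb.trans hab).ne'
  have hX' : X = preimageCircumcenter a b u := hX
  subst hP₁ hP₂ hP₃ hP₁'' hP₂'' hP₃'' hX'
  have h₁ := sqDist_preimageCircumcenter_ellipsePt (s := -u / 3) ha hb.ne' 0 (by push_cast; ring)
  have h₂ := sqDist_preimageCircumcenter_ellipsePt (s := -u / 3 - 2 * π / 3) ha hb.ne' 1
    (by push_cast; ring)
  have h₃ := sqDist_preimageCircumcenter_ellipsePt (s := -u / 3 - 4 * π / 3) ha hb.ne' 2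
    (by push_cast; ring)
  exact ⟨oscCenter_barycenter a b u, h₁.trans h₂.symm, h₂.trans h₃.symm⟩
end

section
/- The three lines joining each cusp to its pre-image concur at the center of area of Steiner's Hat: for each i = 1,2,3, the points P_i, P_i' = Δ_u(t_i), and C̄ are collinear, i.e. the cross product (P_i' − P_i) × (C̄ − P_i) = 0 (where (v₁,v₂) × (w₁,w₂) = v₁w₂ − v₂w₁). -/
open Real

/-- Planar cross product. -/
def cross (v w : ℝ × ℝ) : ℝ := v.1 * w.2 - v.2 * w.1

/-!
The cusp parameters are the `t` with `3 t + u ≡ 0 (mod 2π)`, where `cos u = cos 3t` and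
`sin u = -sin 3t`. The triple-angle formulas then turn the cross product into a polynomial in
`cos t`, `sin t` that vanishes modulo `sin² t + cos² t = 1`.
-/

noncomputable def areaCenter (a b u : ℝ) : ℝ × ℝ :=
  (-((a ^ 2 + b ^ 2) * cos u) / (2 * a), -((a ^ 2 + b ^ 2) * sin u) / (2 * b))

theorem cross_steinerHat_sub_ellipsePt_areaCenter_eq_zero {a b u t : ℝ}
    (hcos : cos u = cos (3 * t)) (hsin : sin u = -sin (3 * t)) :
    cross (steinerHat a b u t - ellipsePt a b t) (areaCenter a b u - ellipsePt a b t) = 0 := by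
  -- For `a = 0` (resp. `b = 0`) every first (resp. second) coordinate is `x / 0 = 0`.
  rcases eq_or_ne a 0 with rfl | ha
  · simp [cross, steinerHat, ellipsePt, areaCenter]
  rcases eq_or_ne b 0 with rfl | hb
  · simp [cross, steinerHat, ellipsePt, areaCenter]
  simp only [cross, steinerHat, ellipsePt, areaCenter, Prod.fst_sub, Prod.snd_sub, cos_add,
    sin_add, hcos, hsin, cos_three_mul, sin_three_mul]
  field_simp
  simp only [sin_sq]
  ring

theorem cross_cusp_eq_zero {a b u t : ℝ} (n : ℤ) (hu : u = n * (2 * π) - 3 * t) :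
    cross (steinerHat a b u t - ellipsePt a b t) (areaCenter a b u - ellipsePt a b t) = 0 :=
  cross_steinerHat_sub_ellipsePt_areaCenter_eq_zero
    (by rw [hu, cos_int_mul_two_pi_sub]) (by rw [hu, sin_int_mul_two_pi_sub])

theorem stmt16_general (a b u : ℝ)
    (C : ℝ × ℝ)
    (hC : C = (-((a ^ 2 + b ^ 2) * cos u) / (2 * a), -((a ^ 2 + b ^ 2) * sin u) / (2 * b))) :
    cross (steinerHat a b u (-u / 3) - ellipsePt a b (-u / 3))
        (C - ellipsePt a b (-u / 3)) = 0 ∧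
    cross (steinerHat a b u (-u / 3 - 2 * π / 3) - ellipsePt a b (-u / 3 - 2 * π / 3))
        (C - ellipsePt a b (-u / 3 - 2 * π / 3)) = 0 ∧
    cross (steinerHat a b u (-u / 3 - 4 * π / 3) - ellipsePt a b (-u / 3 - 4 * π / 3))
        (C - ellipsePt a b (-u / 3 - 4 * π / 3)) = 0 := by
  subst hC
  exact ⟨cross_cusp_eq_zero 0 (by push_cast; ring), cross_cusp_eq_zero (-1) (by push_cast; ring),
    cross_cusp_eq_zero (-2) (by push_cast; ring)⟩

/-- the lines joining each cusp `P_i'` to its pre-image `P_i` concur at the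
center of area `C̄` of Steiner's Hat: `P_i`, `P_i'` and `C̄` are collinear for `i = 1,2,3`. -/
theorem stmt16 (a b u : ℝ) (hb : 0 < b) (hab : b < a)
    (C : ℝ × ℝ)
    (hC : C = (-((a ^ 2 + b ^ 2) * cos u) / (2 * a), -((a ^ 2 + b ^ 2) * sin u) / (2 * b))) :
    cross (steinerHat a b u (-u / 3) - ellipsePt a b (-u / 3))
        (C - ellipsePt a b (-u / 3)) = 0 ∧
    cross (steinerHat a b u (-u / 3 - 2 * π / 3) - ellipsePt a b (-u / 3 - 2 * π / 3))
        (C - ellipsePt a b (-u / 3 - 2 * π / 3)) = 0 ∧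
    cross (steinerHat a b u (-u / 3 - 4 * π / 3) - ellipsePt a b (-u / 3 - 4 * π / 3))
        (C - ellipsePt a b (-u / 3 - 4 * π / 3)) = 0 :=
  stmt16_general a b u C hC
end

section
/- The pre-image triangle T and the cusp triangle T' are orthologic, with the reflection of M about the center of E as an orthology center: for every permutation {i,j,k} = {1,2,3}, the perpendicular from P_i to the line P_j'P_k' passes through −M, i.e. ⟨P_i + M, P_j' − P_k'⟩ = 0. -/
open Real

/-- Euclidean inner product on ℝ². -/
def dot (v w : ℝ × ℝ) : ℝ := v.1 * w.1 + v.2 * w.2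

/-- the pre-image triangle `T` and the cusp triangle `T'` are orthologic with
orthology center `−M` (the reflection of `M` about the center of the ellipse): for every
permutation `{i,j,k} = {1,2,3}`, `⟨P_i + M, P_j' − P_k'⟩ = 0`. -/
theorem stmt17 (a b u : ℝ) (hb : 0 < b) (hab : b < a)
    (M P₁ P₂ P₃ P₁' P₂' P₃' : ℝ × ℝ)
    (hM : M = ellipsePt a b u)
    (hP₁ : P₁ = ellipsePt a b (-u / 3))
    (hP₂ : P₂ = ellipsePt a b (-u / 3 - 2 * π / 3))
    (hP₃ : P₃ = ellipsePt a b (-u / 3 - 4 * π / 3))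
    (hP₁' : P₁' = steinerHat a b u (-u / 3))
    (hP₂' : P₂' = steinerHat a b u (-u / 3 - 2 * π / 3))
    (hP₃' : P₃' = steinerHat a b u (-u / 3 - 4 * π / 3)) :
    dot (P₁ + M) (P₂' - P₃') = 0 ∧ dot (P₁ + M) (P₃' - P₂') = 0 ∧
    dot (P₂ + M) (P₁' - P₃') = 0 ∧ dot (P₂ + M) (P₃' - P₁') = 0 ∧
    dot (P₃ + M) (P₁' - P₂') = 0 ∧ dot (P₃ + M) (P₂' - P₁') = 0 := by
  obtain ⟨s, rfl⟩ : ∃ s, u = 3 * s := ⟨u / 3, by ring⟩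
  subst hM hP₁ hP₂ hP₃ hP₁' hP₂' hP₃'
  have ha : a ≠ 0 := (hb.trans hab).ne'
  have hbne : b ≠ 0 := hb.ne'
  rw [show -(3 * s) / 3 = -s by ring] at *
  simp only [ellipsePt, steinerHat, dot, Prod.mk_add_mk, Prod.mk_sub_mk, Prod.fst, Prod.snd]
  rw [show -s + 3 * s = 2 * s by ring, show -s - 2 * π / 3 + 3 * s = 2 * s - 2 * π / 3 by ring,
    show -s - 4 * π / 3 + 3 * s = 2 * s - 4 * π / 3 by ring]
  have c2 : cos (2 * π / 3) = -(1/2) := by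
    rw [show (2 * π / 3 : ℝ) = π - π/3 by ring, cos_pi_sub, cos_pi_div_three]
  have s2 : sin (2 * π / 3) = Real.sqrt 3 / 2 := by
    rw [show (2 * π / 3 : ℝ) = π - π/3 by ring, sin_pi_sub, sin_pi_div_three]
  have c4 : cos (4 * π / 3) = -(1/2) := by
    rw [show (4 * π / 3 : ℝ) = π + π/3 by ring, cos_add, cos_pi, sin_pi, cos_pi_div_three]; ring
  have s4 : sin (4 * π / 3) = -(Real.sqrt 3 / 2) := by
    rw [show (4 * π / 3 : ℝ) = π + π/3 by ring, sin_add, cos_pi, sin_pi, sin_pi_div_three]; ring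
  have A2c : cos (-s - 2 * π / 3) = -(cos s)/2 - sin s * Real.sqrt 3 / 2 := by
    rw [show -s - 2 * π / 3 = -(s + 2 * π / 3) by ring, cos_neg, cos_add, c2, s2]; ring
  have A2s : sin (-s - 2 * π / 3) = sin s / 2 - cos s * Real.sqrt 3 / 2 := by
    rw [show -s - 2 * π / 3 = -(s + 2 * π / 3) by ring, sin_neg, sin_add, c2, s2]; ring
  have A3c : cos (-s - 4 * π / 3) = -(cos s)/2 + sin s * Real.sqrt 3 / 2 := by
    rw [show -s - 4 * π / 3 = -(s + 4 * π / 3) by ring, cos_neg, cos_add, c4, s4]; ring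
  have A3s : sin (-s - 4 * π / 3) = sin s / 2 + cos s * Real.sqrt 3 / 2 := by
    rw [show -s - 4 * π / 3 = -(s + 4 * π / 3) by ring, sin_neg, sin_add, c4, s4]; ring
  have B2c : cos (2 * s - 2 * π / 3) = -(cos (2*s))/2 + sin (2*s) * Real.sqrt 3 / 2 := by
    rw [cos_sub, c2, s2]; ring
  have B2s : sin (2 * s - 2 * π / 3) = -(sin (2*s))/2 - cos (2*s) * Real.sqrt 3 / 2 := by
    rw [sin_sub, c2, s2]; ring
  have B3c : cos (2 * s - 4 * π / 3) = -(cos (2*s))/2 - sin (2*s) * Real.sqrt 3 / 2 := by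
    rw [cos_sub, c4, s4]; ring
  have B3s : sin (2 * s - 4 * π / 3) = -(sin (2*s))/2 + cos (2*s) * Real.sqrt 3 / 2 := by
    rw [sin_sub, c4, s4]; ring
  rw [A2c, A2s, A3c, A3s, B2c, B2s, B3c, B3s, cos_two_mul, sin_two_mul, cos_three_mul,
    sin_three_mul, cos_neg, sin_neg]
  have hpy : sin s ^ 2 + cos s ^ 2 = 1 := sin_sq_add_cos_sq s
  have h3 : Real.sqrt 3 ^ 2 = 3 := Real.sq_sqrt (by norm_num)
  have key : ∀ x y X Y W Z : ℝ, x * (X / a - Y / a) + y * (W / b - Z / b) =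
      (x * (X - Y) * b + a * (y * (W - Z))) / (a * b) := by
    intros; field_simp
  refine ⟨?_, ?_, ?_, ?_, ?_, ?_⟩ <;> rw [key, div_eq_zero_iff]
  · exact Or.inl (by linear_combination ((4/1:ℝ)*a*b^3*Real.cos s*Real.sin s*Real.sqrt 3 + (4/1:ℝ)*a*b^3*Real.cos s*Real.sin s^3*Real.sqrt 3 + (-4/1:ℝ)*a^3*b*Real.cos s*Real.sin s*Real.sqrt 3 + (-4/1:ℝ)*a^3*b*Real.cos s*Real.sin s^3*Real.sqrt 3) * hpy + ((0:ℝ)) * h3)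
  · exact Or.inl (by linear_combination -(((4/1:ℝ)*a*b^3*Real.cos s*Real.sin s*Real.sqrt 3 + (4/1:ℝ)*a*b^3*Real.cos s*Real.sin s^3*Real.sqrt 3 + (-4/1:ℝ)*a^3*b*Real.cos s*Real.sin s*Real.sqrt 3 + (-4/1:ℝ)*a^3*b*Real.cos s*Real.sin s^3*Real.sqrt 3) * hpy + ((0:ℝ)) * h3))
  · exact Or.inl (by linear_combination ((3/4:ℝ)*a*b^3 + (-1/4:ℝ)*a*b^3*Real.sqrt 3^2 + (6/1:ℝ)*a*b^3*Real.sin s^2 + (1/1:ℝ)*a*b^3*Real.sin s^2*Real.sqrt 3^2 + (5/4:ℝ)*a*b^3*Real.cos s*Real.sin s*Real.sqrt 3 + (1/4:ℝ)*a*b^3*Real.cos s*Real.sin s*Real.sqrt 3^3 + (2/1:ℝ)*a*b^3*Real.cos s*Real.sin s^3*Real.sqrt 3 + (-21/4:ℝ)*a*b^3*Real.cos s^2 + (3/4:ℝ)*a*b^3*Real.cos s^2*Real.sqrt 3^2 + (6/1:ℝ)*a*b^3*Real.cos s^2*Real.sin s^2 + (-2/1:ℝ)*a*b^3*Real.cos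 s^2*Real.sin s^2*Real.sqrt 3^2 + (-6/1:ℝ)*a*b^3*Real.cos s^4 + (-3/4:ℝ)*a^3*b + (1/4:ℝ)*a^3*b*Real.sqrt 3^2 + (-6/1:ℝ)*a^3*b*Real.sin s^2 + (-1/1:ℝ)*a^3*b*Real.sin s^2*Real.sqrt 3^2 + (-5/4:ℝ)*a^3*b*Real.cos s*Real.sin s*Real.sqrt 3 + (-1/4:ℝ)*a^3*b*Real.cos s*Real.sin s*Real.sqrt 3^3 + (-2/1:ℝ)*a^3*b*Real.cos s*Real.sin s^3*Real.sqrt 3 + (21/4:ℝ)*a^3*b*Real.cos s^2 + (-3/4:ℝ)*a^3*b*Real.cos s^2*Real.sqrt 3^2 + (-6/1:ℝ)*a^3*b*Real.cos s^2*Real.sin s^2 + (2/1:ℝ)*a^3*b*Real.cos s^2*Real.sin s^2*Real.sqrt 3^2 + (6/1:ℝ)*a^3*b*Real.cos s^4) * hpy + ((-1/4:ℝ)*a*b^3 + (3/8:ℝ)*a*b^3*Real.cos s*Real.sin s*Real.sqrt 3 + (9/8:ℝ)*a*b^3*Real.cos s^2 + (-1/2:ℝ)*a*b^3*Real.cos s^3*Real.sin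 s*Real.sqrt 3 + (-1/2:ℝ)*a*b^3*Real.cos s^4 + (1/4:ℝ)*a^3*b + (-3/8:ℝ)*a^3*b*Real.cos s*Real.sin s*Real.sqrt 3 + (-9/8:ℝ)*a^3*b*Real.cos s^2 + (1/2:ℝ)*a^3*b*Real.cos s^3*Real.sin s*Real.sqrt 3 + (1/2:ℝ)*a^3*b*Real.cos s^4) * h3)
  · exact Or.inl (by linear_combination -(((3/4:ℝ)*a*b^3 + (-1/4:ℝ)*a*b^3*Real.sqrt 3^2 + (6/1:ℝ)*a*b^3*Real.sin s^2 + (1/1:ℝ)*a*b^3*Real.sin s^2*Real.sqrt 3^2 + (5/4:ℝ)*a*b^3*Real.cos s*Real.sin s*Real.sqrt 3 + (1/4:ℝ)*a*b^3*Real.cos s*Real.sin s*Real.sqrt 3^3 + (2/1:ℝ)*a*b^3*Real.cos s*Real.sin s^3*Real.sqrt 3 + (-21/4:ℝ)*a*b^3*Real.cos s^2 + (3/4:ℝ)*a*b^3*Real.cos s^2*Real.sqrt 3^2 + (6/1:ℝ)*a*b^3*Real.cos s^2*Real.sin s^2 + (-2/1:ℝ)*a*b^3*Real.cos s^2*Real.sin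 s^2*Real.sqrt 3^2 + (-6/1:ℝ)*a*b^3*Real.cos s^4 + (-3/4:ℝ)*a^3*b + (1/4:ℝ)*a^3*b*Real.sqrt 3^2 + (-6/1:ℝ)*a^3*b*Real.sin s^2 + (-1/1:ℝ)*a^3*b*Real.sin s^2*Real.sqrt 3^2 + (-5/4:ℝ)*a^3*b*Real.cos s*Real.sin s*Real.sqrt 3 + (-1/4:ℝ)*a^3*b*Real.cos s*Real.sin s*Real.sqrt 3^3 + (-2/1:ℝ)*a^3*b*Real.cos s*Real.sin s^3*Real.sqrt 3 + (21/4:ℝ)*a^3*b*Real.cos s^2 + (-3/4:ℝ)*a^3*b*Real.cos s^2*Real.sqrt 3^2 + (-6/1:ℝ)*a^3*b*Real.cos s^2*Real.sin s^2 + (2/1:ℝ)*a^3*b*Real.cos s^2*Real.sin s^2*Real.sqrt 3^2 + (6/1:ℝ)*a^3*b*Real.cos s^4) * hpy + ((-1/4:ℝ)*a*b^3 + (3/8:ℝ)*a*b^3*Real.cos s*Real.sin s*Real.sqrt 3 + (9/8:ℝ)*a*b^3*Real.cos s^2 + (-1/2:ℝ)*a*b^3*Real.cos s^3*Real.sin s*Real.sqrt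 3 + (-1/2:ℝ)*a*b^3*Real.cos s^4 + (1/4:ℝ)*a^3*b + (-3/8:ℝ)*a^3*b*Real.cos s*Real.sin s*Real.sqrt 3 + (-9/8:ℝ)*a^3*b*Real.cos s^2 + (1/2:ℝ)*a^3*b*Real.cos s^3*Real.sin s*Real.sqrt 3 + (1/2:ℝ)*a^3*b*Real.cos s^4) * h3))
  · exact Or.inl (by linear_combination ((3/4:ℝ)*a*b^3 + (-1/4:ℝ)*a*b^3*Real.sqrt 3^2 + (6/1:ℝ)*a*b^3*Real.sin s^2 + (1/1:ℝ)*a*b^3*Real.sin s^2*Real.sqrt 3^2 + (-5/4:ℝ)*a*b^3*Real.cos s*Real.sin s*Real.sqrt 3 + (-1/4:ℝ)*a*b^3*Real.cos s*Real.sin s*Real.sqrt 3^3 + (-2/1:ℝ)*a*b^3*Real.cos s*Real.sin s^3*Real.sqrt 3 + (-21/4:ℝ)*a*b^3*Real.cos s^2 + (3/4:ℝ)*a*b^3*Real.cos s^2*Real.sqrt 3^2 + (6/1:ℝ)*a*b^3*Real.cos s^2*Real.sin s^2 + (-2/1:ℝ)*a*b^3*Real.cos s^2*Real.sin s^2*Real.sqrt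 3^2 + (-6/1:ℝ)*a*b^3*Real.cos s^4 + (-3/4:ℝ)*a^3*b + (1/4:ℝ)*a^3*b*Real.sqrt 3^2 + (-6/1:ℝ)*a^3*b*Real.sin s^2 + (-1/1:ℝ)*a^3*b*Real.sin s^2*Real.sqrt 3^2 + (5/4:ℝ)*a^3*b*Real.cos s*Real.sin s*Real.sqrt 3 + (1/4:ℝ)*a^3*b*Real.cos s*Real.sin s*Real.sqrt 3^3 + (2/1:ℝ)*a^3*b*Real.cos s*Real.sin s^3*Real.sqrt 3 + (21/4:ℝ)*a^3*b*Real.cos s^2 + (-3/4:ℝ)*a^3*b*Real.cos s^2*Real.sqrt 3^2 + (-6/1:ℝ)*a^3*b*Real.cos s^2*Real.sin s^2 + (2/1:ℝ)*a^3*b*Real.cos s^2*Real.sin s^2*Real.sqrt 3^2 + (6/1:ℝ)*a^3*b*Real.cos s^4) * hpy + ((-1/4:ℝ)*a*b^3 + (-3/8:ℝ)*a*b^3*Real.cos s*Real.sin s*Real.sqrt 3 + (9/8:ℝ)*a*b^3*Real.cos s^2 + (1/2:ℝ)*a*b^3*Real.cos s^3*Real.sin s*Real.sqrt 3 + (-1/2:ℝ)*a*b^3*Real.cos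 s^4 + (1/4:ℝ)*a^3*b + (3/8:ℝ)*a^3*b*Real.cos s*Real.sin s*Real.sqrt 3 + (-9/8:ℝ)*a^3*b*Real.cos s^2 + (-1/2:ℝ)*a^3*b*Real.cos s^3*Real.sin s*Real.sqrt 3 + (1/2:ℝ)*a^3*b*Real.cos s^4) * h3)
  · exact Or.inl (by linear_combination -(((3/4:ℝ)*a*b^3 + (-1/4:ℝ)*a*b^3*Real.sqrt 3^2 + (6/1:ℝ)*a*b^3*Real.sin s^2 + (1/1:ℝ)*a*b^3*Real.sin s^2*Real.sqrt 3^2 + (-5/4:ℝ)*a*b^3*Real.cos s*Real.sin s*Real.sqrt 3 + (-1/4:ℝ)*a*b^3*Real.cos s*Real.sin s*Real.sqrt 3^3 + (-2/1:ℝ)*a*b^3*Real.cos s*Real.sin s^3*Real.sqrt 3 + (-21/4:ℝ)*a*b^3*Real.cos s^2 + (3/4:ℝ)*a*b^3*Real.cos s^2*Real.sqrt 3^2 + (6/1:ℝ)*a*b^3*Real.cos s^2*Real.sin s^2 + (-2/1:ℝ)*a*b^3*Real.cos s^2*Real.sin s^2*Real.sqrt 3^2 + (-6/1:ℝ)*a*b^3*Real.cos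 s^4 + (-3/4:ℝ)*a^3*b + (1/4:ℝ)*a^3*b*Real.sqrt 3^2 + (-6/1:ℝ)*a^3*b*Real.sin s^2 + (-1/1:ℝ)*a^3*b*Real.sin s^2*Real.sqrt 3^2 + (5/4:ℝ)*a^3*b*Real.cos s*Real.sin s*Real.sqrt 3 + (1/4:ℝ)*a^3*b*Real.cos s*Real.sin s*Real.sqrt 3^3 + (2/1:ℝ)*a^3*b*Real.cos s*Real.sin s^3*Real.sqrt 3 + (21/4:ℝ)*a^3*b*Real.cos s^2 + (-3/4:ℝ)*a^3*b*Real.cos s^2*Real.sqrt 3^2 + (-6/1:ℝ)*a^3*b*Real.cos s^2*Real.sin s^2 + (2/1:ℝ)*a^3*b*Real.cos s^2*Real.sin s^2*Real.sqrt 3^2 + (6/1:ℝ)*a^3*b*Real.cos s^4) * hpy + ((-1/4:ℝ)*a*b^3 + (-3/8:ℝ)*a*b^3*Real.cos s*Real.sin s*Real.sqrt 3 + (9/8:ℝ)*a*b^3*Real.cos s^2 + (1/2:ℝ)*a*b^3*Real.cos s^3*Real.sin s*Real.sqrt 3 + (-1/2:ℝ)*a*b^3*Real.cos s^4 + (1/4:ℝ)*a^3*b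 + (3/8:ℝ)*a^3*b*Real.cos s*Real.sin s*Real.sqrt 3 + (-9/8:ℝ)*a^3*b*Real.cos s^2 + (-1/2:ℝ)*a^3*b*Real.cos s^3*Real.sin s*Real.sqrt 3 + (1/2:ℝ)*a^3*b*Real.cos s^4) * h3))
end

section
/- The pre-image triangle T and the triangle T'' of osculating-circle centers are perspective at the orthocenter of T: there exists a point H ∈ ℝ² such that ⟨H − P_i, P_j − P_k⟩ = 0 for every permutation {i,j,k} = {1,2,3} (H is the orthocenter of T), and for each i = 1,2,3 the points H, P_i, P_i'' are collinear, i.e. (P_i'' − P_i) × (H − P_i) = 0 (where (v₁,v₂) × (w₁,w₂) = v₁w₂ − v₂w₁). -/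
open Real

/-!
Both the osculating centre `P''(t)` and the orthocenter `H` lie on the normal line of the
ellipse at `P(t)`. For `P''` this is the classical fact that the evolute is the envelope of
the normals. For `H` one checks that the point
`H = (-c² cos θ / (2a), -c² sin θ / (2b))` lies on the normal at `P(t)` as soon as
`3t ≡ θ (mod 2π)`, which reduces to `sin (3t - t) = 2 sin t cos t`. The three cusp
pre-images are exactly the solutions of `3t ≡ -u`, so `H` is on all three normals. Finally the
normal at `P(tᵢ)` is perpendicular to `P(tⱼ) - P(tₖ)`, because its inner product with `P(t)`
is `ab cos (tᵢ - t)` and `tᵢ - tⱼ`, `tᵢ - tₖ` are `±2π/3` and `±4π/3`; so the three normals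
are the altitudes of the triangle.
-/

lemma dot_sub_right (n v w : ℝ × ℝ) : dot n (v - w) = dot n v - dot n w := by
  simp only [dot, Prod.fst_sub, Prod.snd_sub]; ring

lemma cross_smul_left (k : ℝ) (v w : ℝ × ℝ) : cross (k • v) w = k * cross v w := by
  simp only [cross, Prod.smul_fst, Prod.smul_snd, smul_eq_mul]; ring

lemma dot_self_mul_dot_eq (n v w : ℝ × ℝ) :
    dot n n * dot v w = dot n v * dot n w + cross n v * cross n w := by
  simp only [dot, cross]; ring

lemma dot_eq_zero_of_cross_eq_zero {n v w : ℝ × ℝ} (hn : n ≠ 0)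
    (hnv : cross n v = 0) (hnw : dot n w = 0) : dot v w = 0 := by
  have hnn : dot n n ≠ 0 := by
    obtain ⟨n₁, n₂⟩ := n
    simpa only [dot, ne_eq, mul_self_add_mul_self_eq_zero, Prod.mk_eq_zero] using hn
  have := dot_self_mul_dot_eq n v w
  rw [hnv, hnw] at this
  simpa [hnn] using this

noncomputable def ellipseNormal (a b t : ℝ) : ℝ × ℝ := (b * cos t, a * sin t)

lemma ellipseNormal_ne_zero {a b : ℝ} (ha : a ≠ 0) (hb : b ≠ 0) (t : ℝ) :
    ellipseNormal a b t ≠ 0 := by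
  intro h
  simp only [ellipseNormal, Prod.mk_eq_zero, mul_eq_zero, ha, hb, false_or] at h
  simpa [h.1, h.2] using sin_sq_add_cos_sq t

lemma dot_ellipseNormal_ellipsePt (a b s t : ℝ) :
    dot (ellipseNormal a b s) (ellipsePt a b t) = a * b * cos (s - t) := by
  simp only [dot, ellipseNormal, ellipsePt, cos_sub]; ring

lemma oscCenter_sub_ellipsePt {a b : ℝ} (ha : a ≠ 0) (hb : b ≠ 0) (t : ℝ) :
    oscCenter a b t - ellipsePt a b t =
      (-((a ^ 2 * sin t ^ 2 + b ^ 2 * cos t ^ 2) / (a * b))) • ellipseNormal a b t := by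
  have h := sin_sq_add_cos_sq t
  simp only [oscCenter, ellipsePt, ellipseNormal, Prod.mk_sub_mk, Prod.smul_mk, smul_eq_mul,
    Prod.mk.injEq]
  constructor
  · field_simp; linear_combination a ^ 2 * cos t * h
  · field_simp; linear_combination (b ^ 2 * sin t) * h

/-- The orthocenter of the triangle inscribed in the ellipse whose parameters `t` satisfy
`3t ≡ θ (mod 2π)`. -/
noncomputable def ellipseOrthocenter (a b θ : ℝ) : ℝ × ℝ :=
  (-((a ^ 2 - b ^ 2) * cos θ / (2 * a)), -((a ^ 2 - b ^ 2) * sin θ / (2 * b)))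

lemma ellipseOrthocenter_add_nat_mul_two_pi (a b θ : ℝ) (n : ℕ) :
    ellipseOrthocenter a b (θ + n * (2 * π)) = ellipseOrthocenter a b θ := by
  simp only [ellipseOrthocenter, cos_add_nat_mul_two_pi, sin_add_nat_mul_two_pi]

lemma cross_ellipseNormal_ellipseOrthocenter {a b : ℝ} (ha : a ≠ 0) (hb : b ≠ 0) (t : ℝ) :
    cross (ellipseNormal a b t) (ellipseOrthocenter a b (3 * t) - ellipsePt a b t) = 0 := by
  have h : cos t * sin (3 * t) - sin t * cos (3 * t) = 2 * sin t * cos t := by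
    rw [mul_comm (cos t), mul_comm (sin t), ← sin_sub, ← sin_two_mul]; ring_nf
  simp only [cross, ellipseNormal, ellipseOrthocenter, ellipsePt, Prod.fst_sub, Prod.snd_sub]
  field_simp
  linear_combination (b ^ 2 - a ^ 2) * h

lemma cross_oscCenter_sub_eq_zero {a b : ℝ} (ha : a ≠ 0) (hb : b ≠ 0) {t : ℝ} {H : ℝ × ℝ}
    (hH : cross (ellipseNormal a b t) (H - ellipsePt a b t) = 0) :
    cross (oscCenter a b t - ellipsePt a b t) (H - ellipsePt a b t) = 0 := by
  rw [oscCenter_sub_ellipsePt ha hb, cross_smul_left, hH, mul_zero]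

lemma dot_sub_ellipsePt_eq_zero {a b : ℝ} (ha : a ≠ 0) (hb : b ≠ 0) {s t r : ℝ} {H : ℝ × ℝ}
    (hH : cross (ellipseNormal a b s) (H - ellipsePt a b s) = 0)
    (hcos : cos (s - t) = cos (s - r)) :
    dot (H - ellipsePt a b s) (ellipsePt a b t - ellipsePt a b r) = 0 :=
  dot_eq_zero_of_cross_eq_zero (ellipseNormal_ne_zero ha hb s) hH (by
    rw [dot_sub_right, dot_ellipseNormal_ellipsePt, dot_ellipseNormal_ellipsePt, hcos, sub_self])

/-- the pre-image triangle `T` and the triangle `T''` of osculating-circle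
centers are perspective at the orthocenter `H` of `T`: `H` lies on each altitude of `T`,
and `H`, `P_i`, `P_i''` are collinear for `i = 1,2,3`. -/
theorem stmt18 (a b u : ℝ) (hb : 0 < b) (hab : b < a)
    (P₁ P₂ P₃ P₁'' P₂'' P₃'' : ℝ × ℝ)
    (hP₁ : P₁ = ellipsePt a b (-u / 3))
    (hP₂ : P₂ = ellipsePt a b (-u / 3 - 2 * π / 3))
    (hP₃ : P₃ = ellipsePt a b (-u / 3 - 4 * π / 3))
    (hP₁'' : P₁'' = oscCenter a b (-u / 3))
    (hP₂'' : P₂'' = oscCenter a b (-u / 3 - 2 * π / 3))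
    (hP₃'' : P₃'' = oscCenter a b (-u / 3 - 4 * π / 3)) :
    ∃ H : ℝ × ℝ,
      (dot (H - P₁) (P₂ - P₃) = 0 ∧
       dot (H - P₂) (P₃ - P₁) = 0 ∧
       dot (H - P₃) (P₁ - P₂) = 0) ∧
      (cross (P₁'' - P₁) (H - P₁) = 0 ∧
       cross (P₂'' - P₂) (H - P₂) = 0 ∧
       cross (P₃'' - P₃) (H - P₃) = 0) := by
  have ha : a ≠ 0 := (hb.trans hab).ne'
  have hb : b ≠ 0 := hb.ne'
  subst hP₁ hP₂ hP₃ hP₁'' hP₂'' hP₃''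
  have on_normal (t : ℝ) (n : ℕ) (ht : -u = 3 * t + n * (2 * π)) :
      cross (ellipseNormal a b t) (ellipseOrthocenter a b (-u) - ellipsePt a b t) = 0 := by
    rw [ht, ellipseOrthocenter_add_nat_mul_two_pi]
    exact cross_ellipseNormal_ellipseOrthocenter ha hb t
  have h₁ := on_normal (-u / 3) 0 (by push_cast; ring)
  have h₂ := on_normal (-u / 3 - 2 * π / 3) 1 (by push_cast; ring)
  have h₃ := on_normal (-u / 3 - 4 * π / 3) 2 (by push_cast; ring)
  have hcos : cos (2 * π / 3) = cos (4 * π / 3) := by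
    rw [← cos_two_pi_sub]; ring_nf
  refine ⟨ellipseOrthocenter a b (-u), ⟨?_, ?_, ?_⟩, cross_oscCenter_sub_eq_zero ha hb h₁,
    cross_oscCenter_sub_eq_zero ha hb h₂, cross_oscCenter_sub_eq_zero ha hb h₃⟩
  · refine dot_sub_ellipsePt_eq_zero ha hb h₁ ?_
    rw [show -u / 3 - (-u / 3 - 2 * π / 3) = 2 * π / 3 by ring,
      show -u / 3 - (-u / 3 - 4 * π / 3) = 4 * π / 3 by ring, hcos]
  · refine dot_sub_ellipsePt_eq_zero ha hb h₂ ?_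
    rw [show -u / 3 - 2 * π / 3 - (-u / 3 - 4 * π / 3) = 2 * π / 3 by ring,
      show -u / 3 - 2 * π / 3 - -u / 3 = -(2 * π / 3) by ring, cos_neg]
  · refine dot_sub_ellipsePt_eq_zero ha hb h₃ ?_
    rw [show -u / 3 - 4 * π / 3 - -u / 3 = -(4 * π / 3) by ring,
      show -u / 3 - 4 * π / 3 - (-u / 3 - 2 * π / 3) = -(2 * π / 3) by ring, cos_neg, cos_neg,
      hcos]
end

section
/- The rotated negative pedal curve Δ*_θ is the image of Steiner's Hat Δ_u under the similarity obtained by rotating about M through θ and scaling about M by cos θ. Precisely, let R_θ be the counterclockwise rotation of ℝ² by θ and define X_θ(t) = M + cos θ · R_θ(Δ_u(t) − M). Then for all t, X_θ(t) lies on the line L*_θ(t) through P(t) whose normal direction is R_θ(P(t) − M), and satisfies the corresponding envelope condition: ⟨X_θ(t) − P(t), R_θ(P(t) − M)⟩ = 0 and ∂/∂t [⟨X − P(t), R_θ(P(t) − M)⟩] evaluated at X = X_θ(t) equals 0. -/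
open Real

/-- the rotated negative pedal curve `Δ*_θ` is the image of Steiner's Hat
under the similarity: rotation about `M` through `θ` followed by scaling about `M` by
`cos θ`. The point `X_θ(t) = M + cos θ · R_θ(Δ_u(t) − M)` lies on the rotated line
`L*_θ(t)` (normal direction `R_θ(P(t) − M)` through `P(t)`) and satisfies the envelope
condition of that family. -/
theorem stmt19 (a b u θ : ℝ) (hb : 0 < b) (hab : b < a)
    (M : ℝ × ℝ) (hM : M = ellipsePt a b u)
    (X : ℝ → ℝ × ℝ)
    (hX : ∀ t, X t = M + cos θ • rot θ (steinerHat a b u t - M)) :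
    ∀ t : ℝ,
      dot (X t - ellipsePt a b t) (rot θ (ellipsePt a b t - M)) = 0 ∧
      dot (X t - ellipsePt a b t) (rot θ (-(a * sin t), b * cos t))
        - dot (-(a * sin t), b * cos t) (rot θ (ellipsePt a b t - M)) = 0 := by
  intro t
  have ha : a ≠ 0 := by nlinarith
  have hb' : b ≠ 0 := hb.ne'
  have h1 := sin_sq_add_cos_sq t
  have h2 := sin_sq_add_cos_sq u
  have h3 := sin_sq_add_cos_sq θ
  have key1 : dot (steinerHat a b u t - ellipsePt a b t) (ellipsePt a b t - ellipsePt a b u) = 0 := by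
    simp only [ellipsePt, steinerHat, dot, Prod.mk_sub_mk, Prod.fst_sub, Prod.snd_sub,
      cos_add, sin_add]
    set s1 := sin t; set c1 := cos t; set s2 := sin u; set c2 := cos u
    linear_combination (norm := (field_simp; ring))
      ((a ^ 2 - b ^ 2) * c1 * c2 - a ^ 2) * h1
      + (a ^ 2 - (a ^ 2 - b ^ 2) * c1 ^ 2) * h2
  have key2 : dot (steinerHat a b u t - ellipsePt a b t) (-(a * sin t), b * cos t)
      - dot (-(a * sin t), b * cos t) (ellipsePt a b t - ellipsePt a b u) = 0 := by
    simp only [ellipsePt, steinerHat, dot, Prod.mk_sub_mk, Prod.fst_sub, Prod.snd_sub,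
      cos_add, sin_add]
    set s1 := sin t; set c1 := cos t; set s2 := sin u; set c2 := cos u
    linear_combination (norm := (field_simp; ring))
      ((a ^ 2 - b ^ 2) * c1 * s2) * h1
  set D := steinerHat a b u t with hD
  simp only [hX, hM, ellipsePt, rot, dot, Prod.mk_sub_mk, Prod.mk_add_mk,
    Prod.fst_add, Prod.snd_add, Prod.fst_sub, Prod.snd_sub, Prod.smul_fst, Prod.smul_snd,
    smul_eq_mul] at key1 key2 ⊢
  constructor
  · linear_combination (cos θ * (sin θ ^ 2 + cos θ ^ 2)) * key1
      + (cos θ * ((a * cos t - a * cos u) ^ 2 + (b * sin t - b * sin u) ^ 2)) * h3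
  · linear_combination (cos θ * (sin θ ^ 2 + cos θ ^ 2)) * key2
      + (2 * cos θ * (-(a * sin t) * (a * cos t - a * cos u)
          + b * cos t * (b * sin t - b * sin u))) * h3
end
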